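/- arXiv:2311.08873 — 8 statements merged into one kernel-verified Lean document; each statement's English description precedes it below -/
import Mathlib

section
/- Let F = F_p and 0 ≤ d < p. For any subset H of F_p of size d+1, the polynomials {(x+h)^d : h ∈ H} in F_p[x] are linearly independent over F_p. -/
theorem shifted_powers_linearIndependent {p : ℕ} (hp : p.Prime) (d : ℕ) (hd : d < p)
    (H : Finset (ZMod p)) (hH : H.card = d + 1) :
    LinearIndependent (ZMod p)
      (fun h : H => (Polynomial.X + Polynomial.C (h : ZMod p)) ^ d) := by
  haveI : Fact p.Prime := ⟨hp⟩
  rw [Fintype.linearIndependent_iff]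
  intro g hg
  -- coefficient extraction
  have hcoeff : ∀ k : ℕ, (∑ h : H, g h * ((h : ZMod p) ^ (d - k) * (d.choose k : ZMod p))) = 0 := by
    intro k
    have := congrArg (fun q => Polynomial.coeff q k) hg
    simpa [Polynomial.finset_sum_coeff, Polynomial.coeff_smul, Polynomial.coeff_X_add_C_pow,
      smul_eq_mul] using this
  have hch : ∀ k : ℕ, k ≤ d → (d.choose k : ZMod p) ≠ 0 := by
    intro k hk h0
    have hdvd : p ∣ d.choose k := (ZMod.natCast_eq_zero_iff _ _).mp h0
    have : p ∣ d.factorial := hdvd.trans ⟨k.factorial * (d-k).factorial, by rw [← Nat.mul_assoc, Nat.choose_mul_factorial_mul_factorial hk]⟩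
    have := (Nat.Prime.dvd_factorial hp).mp this
    omega
  have hsum : ∀ j : ℕ, j ≤ d → (∑ h : H, g h * (h : ZMod p) ^ j) = 0 := by
    intro j hj
    have h1 := hcoeff (d - j)
    have h2 : d - (d - j) = j := by omega
    rw [h2] at h1
    have h3 : (∑ h : H, g h * (h : ZMod p) ^ j) * (d.choose (d - j) : ZMod p) = 0 := by
      rw [Finset.sum_mul]
      simpa [mul_assoc] using h1
    rcases mul_eq_zero.mp h3 with h | h
    · exact h
    · exact absurd h (hch _ (Nat.sub_le d j))
  -- Vandermonde step
  let e : Fin (d + 1) ≃ H := (finCongr hH.symm).trans H.equivFin.symm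
  have hv : Function.Injective (fun i : Fin (d + 1) => ((e i : ZMod p))) := by
    intro a b hab
    exact e.injective (Subtype.ext hab)
  have hz : (fun i : Fin (d + 1) => g (e i)) = 0 := by
    apply Matrix.eq_zero_of_forall_pow_sum_mul_pow_eq_zero hv
    intro i
    have := hsum (i : ℕ) (Nat.lt_succ_iff.mp i.isLt)
    rw [← Equiv.sum_comp e (fun h => g h * (h : ZMod p) ^ (i : ℕ))] at this
    exact this
  intro h
  have := congrFun hz (e.symm h)
  simpa using this
end

section
/- Let F be a field, f ∈ F[x] a polynomial of degree D, where char(F) = 0 or D < char(F). For any finite subset A of F with |A| ≤ D+1, the set of shifted polynomials {f(x+a) : a ∈ A} is linearly independent over F. -/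
open Polynomial

theorem shifts_linearIndependent {F : Type*} [Field F] (f : Polynomial F) (D : ℕ)
    (hdeg : f.degree = D) (hchar : ringChar F = 0 ∨ D < ringChar F)
    (A : Finset F) (hA : A.card ≤ D + 1) :
    LinearIndependent F (fun a : A => f.comp (Polynomial.X + Polynomial.C (a : F))) := by
  classical
  have hf0 : f ≠ 0 := fun h => by simp [h] at hdeg
  have hnd : f.natDegree = D := natDegree_eq_of_degree_eq_some hdeg
  have hcD : f.coeff D ≠ 0 := by
    rw [← hnd]; exact mt leadingCoeff_eq_zero.mp hf0
  -- binomial coefficients are nonzero in F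
  have hchoose : ∀ n, n ≤ D → (D.choose n : F) ≠ 0 := by
    intro n hn
    rcases hchar with h0 | hp
    · haveI : CharP F 0 := h0 ▸ ringChar.charP F
      haveI : CharZero F := CharP.charP_to_charZero F
      exact Nat.cast_ne_zero.mpr (Nat.choose_pos hn).ne'
    · intro h
      set p := ringChar F with hpdef
      haveI : CharP F p := ringChar.charP F
      have hp' : p.Prime := (CharP.char_is_prime_or_zero F p).resolve_right (by omega)
      have hdvd : p ∣ D.choose n := (ringChar.spec F _).mp h
      have hdvd' : p ∣ D.factorial := hdvd.trans
        ⟨n.factorial * (D - n).factorial, by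
          rw [← Nat.choose_mul_factorial_mul_factorial hn]; ring⟩
      have := (Nat.Prime.dvd_factorial hp').mp hdvd'
      omega
  -- degree of Hasse derivatives
  have hhd : ∀ n, n ≤ D → (hasseDeriv n f).degree = ((D - n : ℕ) : WithBot ℕ) := by
    intro n hn
    have hc : (hasseDeriv n f).coeff (D - n) ≠ 0 := by
      rw [hasseDeriv_coeff, Nat.sub_add_cancel hn]
      exact mul_ne_zero (hchoose n hn) hcD
    apply le_antisymm
    · rw [← natDegree_le_iff_degree_le]
      calc (hasseDeriv n f).natDegree ≤ f.natDegree - n := natDegree_hasseDeriv_le f n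
        _ ≤ D - n := by omega
    · exact le_degree_of_ne_zero hc
  rw [Fintype.linearIndependent_iff]
  intro g hg
  have hkey : ∀ n : ℕ, ∑ i : A, g i * (hasseDeriv n f).eval (i : F) = 0 := by
    intro n
    have h := congrArg (fun P : Polynomial F => P.coeff n) hg
    simp only [finset_sum_coeff, coeff_smul, smul_eq_mul, coeff_zero, ← taylor_apply,
      taylor_coeff] at h
    exact h
  -- the key claim: the functional vanishes on all polynomials of degree ≤ D
  have main : ∀ m : ℕ, ∀ P : Polynomial F, P.natDegree ≤ m → P.degree ≤ (D : WithBot ℕ) →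
      ∑ i : A, g i * P.eval (i : F) = 0 := by
    intro m
    induction m using Nat.strong_induction_on with
    | _ m ih =>
      intro P hPm hPD
      by_cases hP : P = 0
      · simp [hP]
      have hkD : P.natDegree ≤ D := natDegree_le_iff_degree_le.mpr hPD
      set k := P.natDegree with hkdef
      set n := D - k with hndef
      have hnD : n ≤ D := Nat.sub_le _ _
      have hdn : D - n = k := by omega
      have hdeg' : (hasseDeriv n f).degree = (k : WithBot ℕ) := by rw [hhd n hnD, hdn]
      have hh0 : hasseDeriv n f ≠ 0 := by
        intro h; rw [h, degree_zero] at hdeg'; exact absurd hdeg' (by simp)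
      have hhnd : (hasseDeriv n f).natDegree = k := natDegree_eq_of_degree_eq_some hdeg'
      have hlc : (hasseDeriv n f).leadingCoeff ≠ 0 := leadingCoeff_ne_zero.mpr hh0
      set c := P.leadingCoeff / (hasseDeriv n f).leadingCoeff with hcdef
      have hc0 : c ≠ 0 := div_ne_zero (leadingCoeff_ne_zero.mpr hP) hlc
      set Q := P - C c * hasseDeriv n f with hQdef
      have hQdeg : Q.degree < (k : WithBot ℕ) := by
        have h1 : (C c * hasseDeriv n f).degree = P.degree := by
          rw [degree_C_mul hc0, hdeg', degree_eq_natDegree hP]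
        have h2 : P.leadingCoeff = (C c * hasseDeriv n f).leadingCoeff := by
          rw [leadingCoeff_mul, leadingCoeff_C, hcdef, div_mul_cancel₀ _ hlc]
        have := degree_sub_lt h1.symm hP h2
        rwa [degree_eq_natDegree hP] at this
      have hsum : ∑ i : A, g i * P.eval (i : F)
          = c * (∑ i : A, g i * (hasseDeriv n f).eval (i : F))
            + ∑ i : A, g i * Q.eval (i : F) := by
        rw [Finset.mul_sum, ← Finset.sum_add_distrib]
        apply Finset.sum_congr rfl
        intro i _
        simp only [hQdef, eval_sub, eval_mul, eval_C]
        ring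
      rw [hsum, hkey n, mul_zero, zero_add]
      by_cases hQ : Q = 0
      · simp [hQ]
      · have hQk : Q.natDegree < k := (natDegree_lt_iff_degree_lt hQ).mpr hQdeg
        exact ih Q.natDegree (lt_of_lt_of_le hQk hPm) Q le_rfl
          (le_trans hQdeg.le (by exact_mod_cast Nat.cast_le.mpr hkD))
  intro i
  have hinj : Set.InjOn (id : F → F) A := fun x _ y _ h => h
  have hiA : (i : F) ∈ A := i.2
  set B := Lagrange.basis A id (i : F) with hBdef
  have hdb : B.degree ≤ (D : WithBot ℕ) := by
    rw [hBdef, Lagrange.degree_basis hinj hiA]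
    exact_mod_cast Nat.cast_le.mpr (by omega : A.card - 1 ≤ D)
  have h1 := main B.natDegree B le_rfl hdb
  have h2 : ∑ j : A, g j * B.eval (j : F) = g i := by
    rw [Fintype.sum_eq_single i]
    · rw [hBdef]
      have := Lagrange.eval_basis_self hinj hiA
      simp only [id] at this
      rw [this, mul_one]
    · intro j hj
      have hne : (i : F) ≠ (j : F) := fun h => hj (Subtype.ext h.symm)
      have := Lagrange.eval_basis_of_ne (v := id) hne j.2
      simp only [id] at this
      rw [hBdef, this, mul_zero]
  rw [h1] at h2
  exact h2.symm
end

section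
/- Let F be a field, f ∈ F[X_1,...,X_n], and suppose X^α has nonzero coefficient in f and is a maximal monomial in f. Let (A_1,m_1),...,(A_n,m_n) be multisets in F (A_i ⊆ F finite, m_i : A_i → ℕ) with Σ_{a∈A_i} m_i(a) ≥ α_i + 1 for all i. Then there exist a_i ∈ A_i and r_i with 0 ≤ r_i ≤ m_i(a_i)-1 for each i, such that the Hasse derivative H^{(r_1,...,r_n)}f evaluated at (a_1,...,a_n) is nonzero. -/
/-- The multivariate Hasse derivative `H^(r)`, acting on monomials by
`H^(r) X^β = (∏ i, C(β i, r i)) • X^(β - r)`. -/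
noncomputable def mvHasseDeriv {F : Type*} [CommRing F] {n : ℕ} (r : Fin n →₀ ℕ)
    (f : MvPolynomial (Fin n) F) : MvPolynomial (Fin n) F :=
  ∑ β ∈ f.support,
    MvPolynomial.monomial (β - r) (((∏ i, (β i).choose (r i) : ℕ) : F) * f.coeff β)

/-!
Hermite interpolation: a nonzero polynomial of degree `≤ α i` cannot have `(H^r g)(a) = 0` for all
`a ∈ A i`, `r < m i a`, since it would be divisible by `∏ (X - a) ^ m i a`, of degree `> α i`. By
duality the coefficient functional `g ↦ [X ^ α i] g` on such polynomials is therefore a linear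
combination `ℓ i` of the functionals `g ↦ (H^r g)(a)`. Taking products of these weights over `i`,
`∑ weight • (H^r f)(a) = ∑ β, f_β ∏ i, ℓ i (X ^ β i)`, and `ℓ i (X ^ k) = [k = α i]` for `k ≤ α i`.
By maximality every other `β` in the support of `f` has some `β i < α i`, so the sum is `f_α ≠ 0`.
-/

open Polynomial Finset

namespace Polynomial

theorem X_sub_C_pow_dvd_iff_hasseDeriv_eval_eq_zero {R : Type*} [CommRing R] {p : R[X]} {a : R}
    {k : ℕ} : (X - C a) ^ k ∣ p ↔ ∀ r < k, (hasseDeriv r p).eval a = 0 := by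
  simp only [X_sub_C_pow_dvd_iff, ← taylor_apply, X_pow_dvd_iff, taylor_coeff]

theorem eq_zero_of_natDegree_lt_of_hasseDeriv_eval_eq_zero {F : Type*} [Field F] {g : F[X]}
    (B : Finset F) (m : F → ℕ) (hdeg : g.natDegree < ∑ a ∈ B, m a)
    (h : ∀ a ∈ B, ∀ r < m a, (hasseDeriv r g).eval a = 0) : g = 0 := by
  by_contra hg
  have hdvd : (∏ a ∈ B, (X - C a) ^ m a) ∣ g :=
    prod_dvd_of_coprime
      (fun a _ b _ hab => (pairwise_coprime_X_sub_C Function.injective_id hab).pow)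
      fun a ha => X_sub_C_pow_dvd_iff_hasseDeriv_eval_eq_zero.2 (h a ha)
  have hprod : (∏ a ∈ B, (X - C a) ^ m a).natDegree = ∑ a ∈ B, m a := by
    rw [natDegree_prod_of_monic _ _ fun a _ => (monic_X_sub_C a).pow _]
    simp
  exact (natDegree_le_of_dvd hdvd hg).not_gt (hprod ▸ hdeg)

theorem exists_sum_mul_hasseDeriv_eval_eq_coeff {F : Type*} [Field F] (B : Finset F)
    (m : F → ℕ) {d : ℕ} (hd : d < ∑ a ∈ B, m a) :
    ∃ c : (Σ _ : F, ℕ) → F, ∀ g : F[X], g.natDegree ≤ d →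
      ∑ t ∈ B.sigma fun a => range (m a), c t * (hasseDeriv t.2 g).eval t.1 = g.coeff d := by
  let V := degreeLE F d
  let L : (Σ _ : F, ℕ) → V →ₗ[F] F := fun t => (leval t.1 ∘ₗ hasseDeriv t.2).domRestrict V
  have hker : ⨅ t : ↥(B.sigma fun a => range (m a)), LinearMap.ker (L t)
      ≤ LinearMap.ker ((lcoeff F d).domRestrict V) := by
    rintro ⟨g, hgV⟩ hg
    simp only [Submodule.mem_iInf, LinearMap.mem_ker] at hg ⊢
    have hg0 : g = 0 := by
      refine eq_zero_of_natDegree_lt_of_hasseDeriv_eval_eq_zero B m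
        ((natDegree_le_iff_degree_le.2 (mem_degreeLE.1 hgV)).trans_lt hd) fun a ha r hr => ?_
      simpa [L] using hg ⟨⟨a, r⟩, mem_sigma.2 ⟨ha, mem_range.2 hr⟩⟩
    simp [hg0]
  obtain ⟨c, hc⟩ := (Submodule.mem_span_image_finset_iff_exists_fun' F).1
    (Set.image_eq_range L _ ▸ mem_span_of_iInf_ker_le_ker hker)
  refine ⟨c, fun g hg => ?_⟩
  simpa [L] using LinearMap.congr_fun hc ⟨g, mem_degreeLE.2 (degree_le_of_natDegree_le hg)⟩

end Polynomial

theorem eval_mvHasseDeriv {F : Type*} [CommRing F] {n : ℕ} (r : Fin n →₀ ℕ)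
    (f : MvPolynomial (Fin n) F) (a : Fin n → F) :
    MvPolynomial.eval a (mvHasseDeriv r f)
      = ∑ β ∈ f.support, f.coeff β * ∏ i, (hasseDeriv (r i) (X ^ β i)).eval (a i) := by
  rw [mvHasseDeriv, map_sum]
  refine sum_congr rfl fun β _ => ?_
  simp only [MvPolynomial.eval_monomial, Finsupp.prod_fintype _ _ fun i => pow_zero (a i),
    X_pow_eq_monomial, hasseDeriv_monomial, eval_monomial, Finsupp.tsub_apply, Nat.cast_prod,
    mul_one, prod_mul_distrib]
  ring

theorem sum_prod_mul_eval_mvHasseDeriv_eq_coeff {F : Type*} [CommRing F] {n : ℕ}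
    (f : MvPolynomial (Fin n) F) (α : Fin n →₀ ℕ)
    (hmax : ∀ β : Fin n →₀ ℕ, (∀ i, α i ≤ β i) → β ≠ α → f.coeff β = 0)
    (T : Fin n → Finset (Σ _ : F, ℕ)) (c : Fin n → (Σ _ : F, ℕ) → F)
    (hc : ∀ i, ∀ g : F[X], g.natDegree ≤ α i →
      ∑ t ∈ T i, c i t * (hasseDeriv t.2 g).eval t.1 = g.coeff (α i)) :
    ∑ p ∈ Fintype.piFinset T, (∏ i, c i (p i)) *
        MvPolynomial.eval (fun i => (p i).1)
          (mvHasseDeriv (Finsupp.equivFunOnFinite.symm fun i => (p i).2) f) = f.coeff α := by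
  have hcX : ∀ i, ∀ k ≤ α i,
      ∑ t ∈ T i, c i t * (hasseDeriv t.2 (X ^ k)).eval t.1 = if α i = k then 1 else 0 :=
    fun i k hk => by rw [hc i _ ((natDegree_X_pow_le k).trans hk), coeff_X_pow]
  calc _ = ∑ β ∈ f.support, f.coeff β *
        ∏ i, ∑ t ∈ T i, c i t * (hasseDeriv t.2 (X ^ β i)).eval t.1 := by
        simp only [eval_mvHasseDeriv, Finsupp.coe_equivFunOnFinite_symm, mul_sum, prod_univ_sum,
          prod_mul_distrib]
        rw [sum_comm]
        refine sum_congr rfl fun β _ => sum_congr rfl fun p _ => by ring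
    _ = f.coeff α * ∏ i, ∑ t ∈ T i, c i t * (hasseDeriv t.2 (X ^ α i)).eval t.1 := by
      refine sum_eq_single α (fun β _ hβα => ?_) fun hα => by
        rw [MvPolynomial.notMem_support_iff.1 hα, zero_mul]
      by_cases hle : ∀ i, α i ≤ β i
      · rw [hmax β hle hβα, zero_mul]
      · obtain ⟨i, hi⟩ := not_forall.1 hle
        have hi : β i < α i := not_le.1 hi
        rw [prod_eq_zero (mem_univ i) (by rw [hcX i _ hi.le, if_neg hi.ne']), mul_zero]
    _ = f.coeff α := by simp [hcX]

theorem generalized_cns_multisets {F : Type*} [Field F] {n : ℕ}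
    (f : MvPolynomial (Fin n) F) (α : Fin n →₀ ℕ)
    (hα : f.coeff α ≠ 0)
    (hmax : ∀ β : Fin n →₀ ℕ, (∀ i, α i ≤ β i) → β ≠ α → f.coeff β = 0)
    (A : Fin n → Finset F) (m : Fin n → F → ℕ)
    (hA : ∀ i, α i + 1 ≤ ∑ a ∈ A i, m i a) :
    ∃ (a : Fin n → F) (r : Fin n →₀ ℕ),
      (∀ i, a i ∈ A i ∧ r i < m i (a i)) ∧
      MvPolynomial.eval a (mvHasseDeriv r f) ≠ 0 := by
  by_contra! hvanish
  choose c hc using fun i => exists_sum_mul_hasseDeriv_eval_eq_coeff (A i) (m i) (hA i)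
  refine hα ?_
  rw [← sum_prod_mul_eval_mvHasseDeriv_eq_coeff f α hmax _ c hc]
  refine sum_eq_zero fun p hp => ?_
  rw [hvanish _ _ fun i => ?_, mul_zero]
  obtain ⟨ha, hr⟩ := mem_sigma.1 (Fintype.mem_piFinset.1 hp i)
  exact ⟨ha, by simpa using hr⟩
end

section
/- Let p be prime and A, B ⊆ F_p with A+B ⊆ Z_d ∪ {0}, where Z_d is the subgroup of d-th roots of unity in F_p^× for some d properly dividing p-1. Then |A|·|B| ≤ d + |B ∩ (-A)|. -/
/-! Stepanov's method. Let `m = |A|`, `n = d + m - 1` and `w_a = ∏_{a' ≠ a} (a - a')⁻¹`, so that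
`∑_a w_a f(a)` is the coefficient of `X^(m-1)` in any `f` of degree `< m`. Then
`Q = ∑_a w_a (X + a)^n - 1` has degree at most `d` and `X^d`-coefficient `binom(n, d)`, which is
nonzero mod `p` since `m ≤ d + 1` and `2d < p`. For `b ∈ B` the `i`-th Taylor coefficient of `Q` at
`b` is `binom(n, i) ∑_a w_a (a + b)^(n-i) - [i = 0]`; as each `a + b` is `0` or a `d`-th root of
unity, the exponent can be lowered to `m - 1 - i`, and the sum becomes `[i = 0]` for
`i < #{a ∈ A | a + b ≠ 0}`. So `b` is a root of `Q` of at least that multiplicity, and these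
multiplicities add up to `|A||B| - |B ∩ (-A)| ≤ deg Q ≤ d`. -/

open Pointwise Polynomial Finset

theorem Nat.two_mul_le_of_dvd_of_ne {d n : ℕ} (h : d ∣ n) (hn : n ≠ 0) (hd : d ≠ n) :
    2 * d ≤ n := by
  obtain ⟨t, rfl⟩ := h
  have : 2 ≤ t := by
    by_contra!
    interval_cases t <;> simp_all
  nlinarith

namespace Lagrange

theorem coeff_eq_sum_nodalWeight_mul {F ι : Type*} [Field F] [DecidableEq ι] {s : Finset ι}
    {v : ι → F} (hvs : Set.InjOn v s) {P : F[X]} (hP : P.degree < #s) :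
    P.coeff (#s - 1) = ∑ i ∈ s, nodalWeight s v i * P.eval (v i) := by
  rw [coeff_eq_sum hvs hP]
  exact sum_congr rfl fun i _ => by rw [nodalWeight, prod_inv_distrib, div_eq_inv_mul]

theorem sum_nodalWeight_mul_add_pow {F : Type*} [Field F] [DecidableEq F] {s : Finset F} (b : F)
    {k : ℕ} (hk : k < #s) :
    ∑ a ∈ s, nodalWeight s id a * (a + b) ^ k = if k + 1 = #s then 1 else 0 := by
  have hdeg : ((X + C b) ^ k).degree < (#s : WithBot ℕ) := by
    rw [degree_pow, degree_X_add_C, nsmul_one]; exact_mod_cast hk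
  have h := coeff_eq_sum_nodalWeight_mul (Set.injOn_id _) hdeg
  simp only [eval_pow, eval_add, eval_X, eval_C, id_eq] at h
  rw [← h, coeff_X_add_C_pow]
  split_ifs with hk'
  · simp [show #s - 1 = k by omega]
  · rw [Nat.choose_eq_zero_of_lt (by omega), Nat.cast_zero, mul_zero]

end Lagrange

namespace Polynomial

theorem X_sub_C_pow_dvd_of_coeff_taylor_eq_zero {R : Type*} [CommRing R] {f : R[X]} {r : R}
    {n : ℕ} (h : ∀ i < n, (taylor r f).coeff i = 0) : (X - C r) ^ n ∣ f := by
  simpa [taylor_taylor, sub_eq_add_neg] using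
    _root_.map_dvd (taylorAlgHom (-r)) (X_pow_dvd_iff.mpr h)

theorem sum_rootMultiplicity_le_natDegree {R : Type*} [CommRing R] [IsDomain R] [DecidableEq R]
    (f : R[X]) (s : Finset R) : ∑ a ∈ s, f.rootMultiplicity a ≤ f.natDegree :=
  calc ∑ a ∈ s, f.rootMultiplicity a
      ≤ ∑ a ∈ s ∪ f.roots.toFinset, f.roots.count a := by
        simp only [count_roots]; exact sum_le_sum_of_subset subset_union_left
    _ = Multiset.card f.roots := Multiset.sum_count_eq_card fun a ha => by simp [ha]
    _ ≤ f.natDegree := card_roots' f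

end Polynomial

theorem card_le_of_forall_eq_zero_or_pow_eq_one {R : Type*} [CommRing R] [IsDomain R]
    {s : Finset R} {d : ℕ} (hd : d ≠ 0) (h : ∀ x ∈ s, x = 0 ∨ x ^ d = 1) : #s ≤ d + 1 := by
  classical
  calc #s ≤ #(insert 0 (nthRootsFinset d (1 : R))) := card_le_card fun x hx => by
        rcases h x hx with h0 | h1
        · simp [h0]
        · exact mem_insert_of_mem ((mem_nthRootsFinset (Nat.pos_of_ne_zero hd) 1).2 h1)
    _ ≤ #(nthRootsFinset d (1 : R)) + 1 := card_insert_le _ _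
    _ ≤ d + 1 := by
        gcongr
        rw [nthRootsFinset_def]
        exact (Multiset.toFinset_card_le _).trans (card_nthRoots d 1)

theorem sum_card_filter_add_ne_zero_add_card_inter_neg {G : Type*} [AddGroup G] [DecidableEq G]
    (A B : Finset G) : ∑ b ∈ B, #{a ∈ A | a + b ≠ 0} + #(B ∩ -A) = #A * #B := by
  have hzero : ∀ b, #{a ∈ A | a + b = 0} = if b ∈ -A then 1 else 0 := fun b => by
    simp_rw [add_eq_zero_iff_eq_neg, filter_eq', mem_neg']
    split_ifs <;> simp
  rw [← filter_mem_eq_inter, card_filter, ← sum_congr rfl fun b _ => hzero b, ← sum_add_distrib,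
    sum_congr rfl fun b _ => (add_comm _ _).trans (card_filter_add_card_filter_not _), sum_const,
    smul_eq_mul, mul_comm]

section Stepanov

variable {F : Type*} [Field F] [DecidableEq F]

noncomputable def stepanovPoly (A : Finset F) (d : ℕ) : F[X] :=
  ∑ a ∈ A, C (Lagrange.nodalWeight A id a) * (X + C a) ^ (d + #A - 1) - 1

theorem coeff_taylor_stepanovPoly (A : Finset F) (d : ℕ) (b : F) (i : ℕ) :
    (taylor b (stepanovPoly A d)).coeff i =
      (∑ a ∈ A, Lagrange.nodalWeight A id a * (a + b) ^ (d + #A - 1 - i)) *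
        (d + #A - 1).choose i - if i = 0 then 1 else 0 := by
  have hshift : ∀ a : F, taylor b (X + C a) = X + C (a + b) := fun a => by
    rw [map_add, taylor_X, taylor_C, C_add, add_assoc, add_comm (C b)]
  simp only [stepanovPoly, map_sub, map_sum, taylor_mul, taylor_C, taylor_pow, taylor_one, hshift,
    coeff_sub, finsetSum_coeff, coeff_C_mul, coeff_X_add_C_pow, coeff_C, sum_mul, mul_assoc]

variable {A : Finset F} {d : ℕ}

theorem natDegree_stepanovPoly_le : (stepanovPoly A d).natDegree ≤ d := by
  refine natDegree_le_iff_coeff_eq_zero.mpr fun i hi => ?_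
  rw [← taylor_zero (stepanovPoly A d), coeff_taylor_stepanovPoly, if_neg (by omega), sub_zero]
  rcases le_or_gt i (d + #A - 1) with hiD | hiD
  · rw [Lagrange.sum_nodalWeight_mul_add_pow 0 (by omega), if_neg (by omega), zero_mul]
  · rw [Nat.choose_eq_zero_of_lt hiD, Nat.cast_zero, mul_zero]

theorem coeff_stepanovPoly_self (hd : d ≠ 0) (hA : A.Nonempty) :
    (stepanovPoly A d).coeff d = (d + #A - 1).choose d := by
  have := hA.card_pos
  rw [← taylor_zero (stepanovPoly A d), coeff_taylor_stepanovPoly, if_neg hd, sub_zero,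
    Lagrange.sum_nodalWeight_mul_add_pow 0 (by omega), if_pos (by omega), one_mul]

theorem stepanovPoly_ne_zero (hd : d ≠ 0) (hA : A.Nonempty)
    (hchoose : ((d + #A - 1).choose d : F) ≠ 0) : stepanovPoly A d ≠ 0 := fun h =>
  hchoose (by rw [← coeff_stepanovPoly_self hd hA, h, coeff_zero])

theorem X_sub_C_pow_dvd_stepanovPoly {b : F} (hb : ∀ a ∈ A, a + b = 0 ∨ (a + b) ^ d = 1) :
    (X - C b) ^ #{a ∈ A | a + b ≠ 0} ∣ stepanovPoly A d := by
  refine X_sub_C_pow_dvd_of_coeff_taylor_eq_zero fun i hi => ?_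
  have hiA : i < #A := hi.trans_le (card_filter_le _ _)
  have hpow : ∀ a ∈ A, Lagrange.nodalWeight A id a * (a + b) ^ (d + #A - 1 - i) =
      Lagrange.nodalWeight A id a * (a + b) ^ (#A - 1 - i) := fun a ha => by
    rcases hb a ha with h0 | h1
    · have : #{a ∈ A | a + b ≠ 0} < #A :=
        card_lt_card (filter_ssubset.mpr ⟨a, ha, not_not.mpr h0⟩)
      rw [h0, zero_pow (by omega), zero_pow (by omega)]
    · rw [show d + #A - 1 - i = d + (#A - 1 - i) by omega, pow_add, h1, one_mul]
  rw [coeff_taylor_stepanovPoly, sum_congr rfl hpow,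
    Lagrange.sum_nodalWeight_mul_add_pow b (by omega)]
  by_cases hi0 : i = 0
  · rw [if_pos (by omega), if_pos hi0, hi0, Nat.choose_zero_right]; simp
  · rw [if_neg (by omega), if_neg hi0, zero_mul, sub_zero]

end Stepanov

theorem hanson_petridis {p : ℕ} (hp : p.Prime) (d : ℕ) (hd : d ∣ p - 1) (hdp : d ≠ p - 1)
    (A B : Finset (ZMod p))
    (hAB : ∀ c ∈ A + B, c = 0 ∨ c ^ d = 1) :
    A.card * B.card ≤ d + (B ∩ (-A)).card := by
  classical
  have : Fact p.Prime := ⟨hp⟩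
  rcases A.eq_empty_or_nonempty with rfl | hA
  · simp
  rcases B.eq_empty_or_nonempty with rfl | ⟨b₀, hb₀⟩
  · simp
  have hroot : ∀ b ∈ B, ∀ a ∈ A, a + b = 0 ∨ (a + b) ^ d = 1 :=
    fun b hb a ha => hAB _ (add_mem_add ha hb)
  have hd0 : d ≠ 0 := by rintro rfl; exact hdp (Nat.eq_zero_of_zero_dvd hd).symm
  have hAd : #A ≤ d + 1 := by
    rw [← card_image_of_injective A (add_left_injective b₀)]
    refine card_le_of_forall_eq_zero_or_pow_eq_one hd0 fun _ hx => ?_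
    obtain ⟨a, ha, rfl⟩ := mem_image.mp hx
    exact hroot b₀ hb₀ a ha
  have h2d := Nat.two_mul_le_of_dvd_of_ne hd (by have := hp.two_le; omega) hdp
  have hchoose : ((d + #A - 1).choose d : ZMod p) ≠ 0 := by
    rw [Ne, ZMod.natCast_eq_zero_iff, ← hp.coprime_iff_not_dvd]
    exact hp.coprime_choose_of_lt (by omega) (by have := hA.card_pos; omega)
  have hQ : stepanovPoly A d ≠ 0 := stepanovPoly_ne_zero hd0 hA hchoose
  calc #A * #B = ∑ b ∈ B, #{a ∈ A | a + b ≠ 0} + #(B ∩ -A) :=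
        (sum_card_filter_add_ne_zero_add_card_inter_neg A B).symm
    _ ≤ ∑ b ∈ B, (stepanovPoly A d).rootMultiplicity b + #(B ∩ -A) := by
        gcongr with b hb
        exact (le_rootMultiplicity_iff hQ).mpr (X_sub_C_pow_dvd_stepanovPoly (hroot b hb))
    _ ≤ d + #(B ∩ -A) := by
        gcongr
        exact (sum_rootMultiplicity_le_natDegree _ B).trans natDegree_stepanovPoly_le
end

section
/- Let F be a field, (A,m) a finite multiset in F^n (A ⊆ F^n finite, m : A → ℕ positive). Then the operators {(T^a)^{(β)} : a ∈ A, β ∈ ℕ^n, |β| ≤ m(a)-1} on F[X_1,...,X_n] are linearly independent, where (T^a)^{(β)} f(X) = [Y^β] f(X + a + Y). -/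
/-- The multishift operator `(T^a)^(β) = H^(β) ∘ T^a`, where `T^a f (X) = f(X + a)`. -/
noncomputable def multishift {F : Type*} [CommRing F] {n : ℕ} (a : Fin n → F)
    (β : Fin n →₀ ℕ) (f : MvPolynomial (Fin n) F) : MvPolynomial (Fin n) F :=
  mvHasseDeriv β
    (MvPolynomial.aeval (fun i => MvPolynomial.X i + MvPolynomial.C (a i)) f)

/-!
Evaluating an operator at `f` and taking the constant coefficient turns `(T^a)^{(β)}` into the
functional `f ↦ [X^β] f(X + a)`, so it suffices to separate these functionals triangularly with
respect to `|β|`. For the index `(a₀, β₀)` take `f = (X - a₀)^β₀ · G`, where `G(a₀) ≠ 0` and `G`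
vanishes to order `M > |β|` at every other point of `A` (a product of `M`-th powers of linear
forms `X_j - b_j` with `b_j ≠ a₀_j`). Then `[X^β] f(X + a) = 0` for `a ≠ a₀`, while for `a = a₀`
it vanishes unless `β₀ ≤ β`, i.e. unless `β = β₀` or `|β| > |β₀|`.
-/

open MvPolynomial Finsupp

theorem linearIndependent_of_exists_dual_triangular {K V ι α : Type*} [Ring K]
    [NoZeroDivisors K] [AddCommGroup V] [Module K V] [LinearOrder α] (v : ι → V) (r : ι → α)
    (h : ∀ i, ∃ φ : V →ₗ[K] K, φ (v i) ≠ 0 ∧ ∀ j ≠ i, r j ≤ r i → φ (v j) = 0) :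
    LinearIndependent K v := by
  classical
  rw [linearIndependent_iff']
  intro s g hsum
  by_contra! hne
  obtain ⟨i, hi, hmax⟩ := (s.filter (g · ≠ 0)).exists_max_image r
    (by simpa [Finset.filter_nonempty_iff] using hne)
  rw [Finset.mem_filter] at hi
  obtain ⟨φ, hφi, hφj⟩ := h i
  have hφsum := congrArg φ hsum
  rw [map_sum, map_zero, Finset.sum_eq_single_of_mem i hi.1] at hφsum
  · exact mul_ne_zero hi.2 hφi (by simpa using hφsum)
  · intro j hj hji
    by_cases hgj : g j = 0
    · simp [hgj]
    · simp [hφj j hji (hmax j (Finset.mem_filter.mpr ⟨hj, hgj⟩))]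

theorem Finsupp.eq_of_le_of_degree_le {σ : Type*} {β γ : σ →₀ ℕ} (hle : β ≤ γ)
    (hdeg : γ.degree ≤ β.degree) : γ = β := by
  obtain ⟨δ, rfl⟩ := le_iff_exists_add.mp hle
  rw [map_add] at hdeg
  rw [(degree_eq_zero_iff δ).mp (by omega), add_zero]

namespace MvPolynomial

section Shift

variable {σ R : Type*} [CommRing R]

noncomputable def shift (a : σ → R) : MvPolynomial σ R →ₐ[R] MvPolynomial σ R :=
  aeval fun i => X i + C (a i)

@[simp]
theorem shift_X (a : σ → R) (i : σ) : shift a (X i) = X i + C (a i) :=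
  aeval_X _ _

@[simp]
theorem shift_C (a : σ → R) (r : R) : shift a (C r) = C r :=
  algHom_C _ _

theorem shift_shift (a b : σ → R) (p : MvPolynomial σ R) :
    shift a (shift b p) = shift (a + b) p := by
  have : (shift a).comp (shift b) = shift (a + b) :=
    algHom_ext fun i => by simp [add_assoc, add_comm (C (a i))]
  exact DFunLike.congr_fun this p

theorem shift_shift_neg (a : σ → R) (p : MvPolynomial σ R) : shift a (shift (-a) p) = p := by
  have : shift (0 : σ → R) = AlgHom.id R _ := algHom_ext fun i => by simp
  rw [shift_shift, add_neg_cancel, this, AlgHom.id_apply]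

theorem coeff_zero_shift (a : σ → R) (p : MvPolynomial σ R) :
    (shift a p).coeff 0 = eval a p := by
  have : constantCoeff.comp (shift a).toRingHom = eval a :=
    ringHom_ext (fun r => by simp) fun i => by simp
  exact DFunLike.congr_fun this p

end Shift

section Order

variable {σ R : Type*} [CommSemiring R]

theorem coeff_X_pow_eq_zero_of_degree_lt {β : σ →₀ ℕ} {k : ℕ} (hβ : β.degree < k) (j : σ) :
    (X j ^ k : MvPolynomial σ R).coeff β = 0 := by
  classical
  rw [coeff_X_pow, if_neg]
  rintro rfl
  simp at hβ

theorem coeff_mul_eq_zero_of_degree_lt {p q : MvPolynomial σ R} {k : ℕ}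
    (hq : ∀ δ : σ →₀ ℕ, δ.degree < k → q.coeff δ = 0) {β : σ →₀ ℕ} (hβ : β.degree < k) :
    (p * q).coeff β = 0 := by
  classical
  rw [coeff_mul]
  refine Finset.sum_eq_zero fun x hx => ?_
  have hdeg : x.2.degree ≤ β.degree :=
    degree_mono (Finset.HasAntidiagonal.mem_antidiagonal.mp hx ▸ le_add_self)
  rw [hq x.2 (by omega), mul_zero]

theorem exists_eval_ne_zero_coeff_shift_eq_zero {F : Type*} [CommRing F] [IsDomain F]
    (A : Finset (σ → F)) {a : σ → F} (ha : a ∉ A) (k : ℕ) :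
    ∃ G : MvPolynomial σ F, eval a G ≠ 0 ∧
      ∀ b ∈ A, ∀ β : σ →₀ ℕ, β.degree < k → (shift b G).coeff β = 0 := by
  classical
  induction A using Finset.induction_on with
  | empty => exact ⟨1, by simp, by simp⟩
  | insert b A _ ih =>
    rw [Finset.mem_insert, not_or] at ha
    obtain ⟨G, hG, hGA⟩ := ih ha.2
    obtain ⟨j, hj⟩ := Function.ne_iff.mp ha.1
    refine ⟨G * (X j - C (b j)) ^ k, ?_, ?_⟩
    · simpa using mul_ne_zero hG (pow_ne_zero _ (sub_ne_zero.mpr hj))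
    rintro b' hb' β hβ
    rw [map_mul]
    rcases Finset.mem_insert.mp hb' with rfl | hb'
    · refine coeff_mul_eq_zero_of_degree_lt (fun δ hδ => ?_) hβ
      simpa using coeff_X_pow_eq_zero_of_degree_lt hδ j
    · rw [mul_comm]
      exact coeff_mul_eq_zero_of_degree_lt (hGA b' hb') hβ

end Order

end MvPolynomial

theorem coeff_zero_mvHasseDeriv {F : Type*} [CommRing F] {n : ℕ} (r : Fin n →₀ ℕ)
    (f : MvPolynomial (Fin n) F) : (mvHasseDeriv r f).coeff 0 = f.coeff r := by
  classical
  simp only [mvHasseDeriv, coeff_sum, coeff_monomial, tsub_eq_zero_iff_le]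
  rw [Finset.sum_eq_single r]
  · simp
  · intro β _ hβr
    split_ifs with hle
    · obtain ⟨i, hi⟩ : ∃ i, β i < r i := by
        by_contra! hge
        exact hβr (le_antisymm hle hge)
      rw [Finset.prod_eq_zero (Finset.mem_univ i) (Nat.choose_eq_zero_of_lt hi), Nat.cast_zero,
        zero_mul]
    · rfl
  · simp +contextual

theorem coeff_zero_multishift {F : Type*} [CommRing F] {n : ℕ} (a : Fin n → F)
    (β : Fin n →₀ ℕ) (f : MvPolynomial (Fin n) F) :
    (multishift a β f).coeff 0 = (shift a f).coeff β :=
  coeff_zero_mvHasseDeriv β _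

theorem multishift_linearIndependent {F : Type*} [Field F] {n : ℕ}
    (A : Finset (Fin n → F)) (m : (Fin n → F) → ℕ) (hm : ∀ a ∈ A, 0 < m a) :
    LinearIndependent F
      (fun x : {q : (Fin n → F) × (Fin n →₀ ℕ) //
          q.1 ∈ A ∧ (q.2.sum fun _ k => k) ≤ m q.1 - 1} =>
        (multishift x.1.1 x.1.2 :
          MvPolynomial (Fin n) F → MvPolynomial (Fin n) F)) := by
  classical
  refine linearIndependent_of_exists_dual_triangular _ (fun x => x.1.2.degree) ?_
  rintro ⟨⟨a₀, β₀⟩, ha₀, -⟩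
  obtain ⟨G, hG, hGA⟩ :=
    exists_eval_ne_zero_coeff_shift_eq_zero (A.erase a₀) (A.notMem_erase a₀) (A.sup m)
  set f := shift (-a₀) (monomial β₀ 1) * G
  have hf : shift a₀ f = monomial β₀ 1 * shift a₀ G := by
    rw [map_mul, shift_shift_neg]
  refine ⟨(lcoeff F 0).comp (LinearMap.proj f), ?_, ?_⟩
  · simpa [coeff_zero_multishift, hf, coeff_monomial_mul', coeff_zero_shift] using hG
  rintro ⟨⟨a, β⟩, ha, hβ⟩ hne hdeg
  dsimp only at ha hβ hdeg
  simp only [LinearMap.coe_comp, Function.comp_apply, LinearMap.coe_proj, Function.eval,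
    lcoeff_apply, coeff_zero_multishift]
  by_cases haa₀ : a = a₀
  · subst haa₀
    rw [hf, coeff_monomial_mul', if_neg]
    exact fun hle => hne (by simpa using eq_of_le_of_degree_le hle hdeg)
  · rw [map_mul]
    refine coeff_mul_eq_zero_of_degree_lt (hGA a (Finset.mem_erase.mpr ⟨haa₀, ha⟩)) ?_
    have hma := hm a ha
    have hmM := Finset.le_sup (f := m) ha
    change β.degree ≤ m a - 1 at hβ
    omega
end

section
/- Let F be a field with char(F) = 0 or with all relevant coordinates less than char(F), and let A ⊆ F^n be contained in a box A_1 × ... × A_n with each A_i ⊆ F finite. Then for any nonzero linear combination ℓ = Σ_{a∈A} c_a T^a of shift operators (not all c_a zero), there exists α ∈ ℕ^n with |α| ≤ Σ_{i=1}^n (|A_i|-1) such that Σ_{a∈A} c_a a^α ≠ 0. -/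
theorem box_degree_bound {F : Type*} [Field F] {n : ℕ}
    (B : Fin n → Finset F)
    (hchar : ringChar F = 0 ∨ ∀ i, (B i).card ≤ ringChar F)
    (A : Finset (Fin n → F)) (hbox : ∀ a ∈ A, ∀ i, a i ∈ B i)
    (c : (Fin n → F) → F) (hc : ∃ a ∈ A, c a ≠ 0) :
    ∃ α : Fin n → ℕ, (∑ i, α i) ≤ (∑ i, ((B i).card - 1)) ∧
      ∑ a ∈ A, c a * ∏ j, a j ^ α j ≠ 0 := by
  classical
  obtain ⟨a₀, ha₀, hc₀⟩ := hc
  by_contra hcon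
  push_neg at hcon
  set L : Fin n → Polynomial F := fun i => Lagrange.basis (B i) id (a₀ i) with hL
  have hinj : ∀ i, Set.InjOn (id : F → F) (B i) := fun i => Function.injective_id.injOn
  have hmem : ∀ i, a₀ i ∈ B i := fun i => hbox a₀ ha₀ i
  have hcard : ∀ i, 0 < (B i).card := fun i => Finset.card_pos.2 ⟨_, hmem i⟩
  have hdeg : ∀ i, (L i).natDegree < (B i).card := by
    intro i
    rw [hL, Lagrange.natDegree_basis (hinj i) (hmem i)]
    exact Nat.sub_lt (hcard i) one_pos
  have heval : ∀ i (x : F), (L i).eval x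
      = ∑ k ∈ Finset.range (B i).card, (L i).coeff k * x ^ k := by
    intro i x
    exact Polynomial.eval_eq_sum_range' (hdeg i) x
  have key1 : ∑ a ∈ A, c a * ∏ i, (L i).eval (a i) = c a₀ := by
    rw [Finset.sum_eq_single a₀]
    · have h1 : ∀ i, (L i).eval (a₀ i) = 1 := fun i =>
        Lagrange.eval_basis_self (hinj i) (hmem i)
      simp [h1]
    · intro a ha hne
      have hex : ∃ i, a i ≠ a₀ i := by
        by_contra hall; push_neg at hall
        exact hne (funext hall)
      obtain ⟨i, hi⟩ := hex
      have h0 : (L i).eval (a i) = 0 := by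
        rw [hL]
        simpa using Lagrange.eval_basis_of_ne (v := id) (Ne.symm hi) (hbox a ha i)
      rw [Finset.prod_eq_zero (Finset.mem_univ i) h0, mul_zero]
    · intro h; exact absurd ha₀ h
  have key2 : ∑ a ∈ A, c a * ∏ i, (L i).eval (a i) = 0 := by
    calc ∑ a ∈ A, c a * ∏ i, (L i).eval (a i)
        = ∑ a ∈ A, c a * ∑ α ∈ Fintype.piFinset (fun i => Finset.range (B i).card),
            ∏ i, ((L i).coeff (α i) * (a i) ^ (α i)) := by
          refine Finset.sum_congr rfl fun a _ => ?_
          congr 1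
          simp_rw [heval]
          exact Finset.prod_univ_sum _ _
      _ = ∑ α ∈ Fintype.piFinset (fun i => Finset.range (B i).card),
            (∏ i, (L i).coeff (α i)) * ∑ a ∈ A, c a * ∏ j, (a j) ^ (α j) := by
          simp_rw [Finset.mul_sum, Finset.prod_mul_distrib]
          rw [Finset.sum_comm]
          refine Finset.sum_congr rfl fun α _ => ?_
          refine Finset.sum_congr rfl fun a _ => ?_
          ring
      _ = 0 := by
          refine Finset.sum_eq_zero fun α hα => ?_
          rw [hcon α ?_, mul_zero]
          refine Finset.sum_le_sum fun i _ => ?_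
          have := (Fintype.mem_piFinset.1 hα) i
          have := Finset.mem_range.1 this
          omega
  exact hc₀ (by rw [← key1]; exact key2)
end

section
/- Let p be a prime and A ⊆ F_p^n a set containing no nontrivial 3-term arithmetic progression (i.e., x + y = 2z with x,y,z ∈ A implies x = y = z). Then |A| ≤ 3·N(n,p,(p-1)n/3), where N(n,p,r) = #{α ∈ ℕ^n : α_i ≤ p-1 ∀i, Σα_i ≤ r}. -/
/-!
Polynomial method, in the slice-rank form. Put `D = (q - 1) n`, let `U` be the span of the
monomial functions (exponents `< q`) of degree `≤ 2D/3` and `Z` the functions supported on `2 • A`.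
The involution `α ↦ (q - 1) - α` maps the monomials of degree `> 2D/3` into the `N` monomials of
degree `≤ D/3`, so `U` has codimension at most `N` and `dim (U ⊓ Z) ≥ |A| - N`. Some `f ∈ U ⊓ Z`
has support of size at least `dim (U ⊓ Z)`. As `A` has no nontrivial progression, the matrix
`f (a + b)` on `A × A` is diagonal with that many nonzero entries; but by the binomial theorem every
monomial of degree `≤ 2D/3` in `x + y` splits into terms of degree `≤ D/3` in `x` or in `y`, so the
matrix has rank at most `2N`. Hence `|A| ≤ 3N`.
-/

open Finset Module Submodule

section SupportRank

variable {K : Type*} [Field K]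

theorem exists_mem_finrank_le_card_support [DecidableEq K] {ι : Type*} [Fintype ι]
    (W : Submodule K (ι → K)) : ∃ f ∈ W, finrank K W ≤ #{i | f i ≠ 0} := by
  set S : Set ℕ := {k | ∃ g ∈ W, #{i | g i ≠ 0} = k}
  have hbdd : BddAbove S := ⟨Fintype.card ι, by rintro _ ⟨g, -, rfl⟩; exact card_le_univ _⟩
  obtain ⟨f, hfW, hf⟩ : sSup S ∈ S := Nat.sSup_mem ⟨0, 0, W.zero_mem, by simp⟩ hbdd
  have hmax : ∀ g ∈ W, #{i | g i ≠ 0} ≤ #{i | f i ≠ 0} :=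
    fun g hg => hf ▸ le_csSup hbdd ⟨g, hg, rfl⟩
  set s : Finset ι := {i | f i ≠ 0}
  -- A nonzero `g ∈ W` vanishing on `s` would give `f + g` a strictly larger support.
  have hinj : Function.Injective (LinearMap.funLeft K K ((↑) : s → ι) ∘ₗ W.subtype) := by
    refine (injective_iff_map_eq_zero _).mpr fun g hg => ?_
    have hgs : ∀ i ∈ s, (g : ι → K) i = 0 := fun i hi => congrFun hg ⟨i, hi⟩
    by_contra hg0
    obtain ⟨t, ht⟩ : ∃ t, (g : ι → K) t ≠ 0 := by
      by_contra! h
      exact hg0 (Subtype.ext (funext h))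
    have hss : s ⊂ ({i | (f + g : ι → K) i ≠ 0} : Finset ι) := by
      refine (ssubset_iff_of_subset fun i hi => ?_).mpr ⟨t, ?_, ?_⟩
      · simp_all [s]
      · have : f t = 0 := by by_contra h; exact ht (hgs t (by simp [s, h]))
        simp [this, ht]
      · intro hts; exact ht (hgs t hts)
    exact (card_lt_card hss).not_ge (hmax _ (W.add_mem hfW g.2))
  refine ⟨f, hfW, ?_⟩
  simpa using LinearMap.finrank_le_finrank_of_injective hinj

theorem card_le_finrank_pi_compl_bot {X : Type*} [Finite X] (s : Finset X) :
    #s ≤ finrank K (pi (↑s)ᶜ fun _ : X => (⊥ : Submodule K K)) := by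
  classical
  have hind : LinearIndependent K fun a : s => (Pi.single (a : X) (1 : K) : X → K) := by
    simpa [Function.comp_def] using
      (Pi.basisFun K X).linearIndependent.comp _ Subtype.val_injective
  calc #s = finrank K (span K (Set.range fun a : s => (Pi.single (a : X) (1 : K) : X → K))) := by
        rw [finrank_span_eq_card hind, Fintype.card_coe]
    _ ≤ _ := by
        refine Submodule.finrank_mono (span_le.mpr ?_)
        rintro _ ⟨a, rfl⟩ x hx
        exact (mem_bot K).mpr (Pi.single_eq_of_ne (fun h => hx (by rw [h]; exact a.2)) 1)

theorem finrank_le_finrank_span_image_add_card_compl {M κ : Type*} [AddCommGroup M]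
    [Module K M] [Fintype κ] [DecidableEq κ] {v : κ → M} (hv : span K (Set.range v) = ⊤)
    (s : Finset κ) : finrank K M ≤ finrank K (span K (v '' s)) + #sᶜ := by
  classical
  set t : Finset M := sᶜ.image v
  have htop : span K (v '' s) ⊔ span K (t : Set M) = ⊤ := by
    rw [← span_union, coe_image, ← Set.image_union, coe_compl, Set.union_compl_self,
      Set.image_univ, hv]
  have := FiniteDimensional.span_of_finite K (s.finite_toSet.image v)
  calc finrank K M = finrank K (span K (v '' s) ⊔ span K (t : Set M) : Submodule K M) := by
        rw [htop, finrank_top]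
    _ ≤ finrank K (span K (v '' s)) + finrank K (span K (t : Set M)) :=
        finrank_add_le_finrank_add_finrank _ _
    _ ≤ finrank K (span K (v '' s)) + #sᶜ :=
        Nat.add_le_add_left ((finrank_span_finset_le_card t).trans card_image_le) _

end SupportRank

section SliceSpan

variable {K X κ : Type*}

def sliceSpan [CommRing K] (e : κ → X → K) (s : Finset κ) : Submodule K (X → X → K) where
  carrier := {F | ∃ u v : κ → X → K, ∀ x y, F x y = ∑ k ∈ s, (e k x * u k y + v k x * e k y)}
  add_mem' := by
    rintro F G ⟨u, v, hF⟩ ⟨u', v', hG⟩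
    refine ⟨u + u', v + v', fun x y => ?_⟩
    simp only [Pi.add_apply, hF, hG, ← sum_add_distrib]
    exact sum_congr rfl fun _ _ => by ring
  zero_mem' := ⟨0, 0, by simp⟩
  smul_mem' := by
    rintro c F ⟨u, v, hF⟩
    refine ⟨c • u, c • v, fun x y => ?_⟩
    simp only [Pi.smul_apply, smul_eq_mul, hF, mul_sum]
    exact sum_congr rfl fun _ _ => by ring

variable {e : κ → X → K} {s : Finset κ} {k : κ}

section CommRing

variable [CommRing K]

theorem mul_left_mem_sliceSpan (hk : k ∈ s) (u : X → K) :
    (fun x y => e k x * u y) ∈ sliceSpan e s := by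
  classical
  exact ⟨Pi.single k u, 0, fun x y => by simp [Pi.single_apply, ite_apply, hk]⟩

theorem mul_right_mem_sliceSpan (hk : k ∈ s) (v : X → K) :
    (fun x y => v x * e k y) ∈ sliceSpan e s := by
  classical
  exact ⟨0, Pi.single k v, fun x y => by simp [Pi.single_apply, ite_apply, hk]⟩

end CommRing

variable [Field K]

theorem linearIndependent_of_diagonal {F : X → X → K} (T : Finset X)
    (hoff : ∀ a ∈ T, ∀ b ∈ T, a ≠ b → F a b = 0) (hdiag : ∀ a ∈ T, F a a ≠ 0) :
    LinearIndependent K fun a : T => F a := by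
  refine Fintype.linearIndependent_iff.mpr fun c hc b => ?_
  have hb := congrFun hc b
  simp only [Finset.sum_apply, Pi.smul_apply, smul_eq_mul, Pi.zero_apply] at hb
  rw [sum_eq_single b (fun a _ hab => by rw [hoff a a.2 b b.2 (Subtype.coe_ne_coe.mpr hab),
    mul_zero]) (by simp)] at hb
  exact (mul_eq_zero.mp hb).resolve_right (hdiag b b.2)

theorem card_le_of_mem_sliceSpan {F : X → X → K} (hF : F ∈ sliceSpan e s) (T : Finset X)
    (hoff : ∀ a ∈ T, ∀ b ∈ T, a ≠ b → F a b = 0) (hdiag : ∀ a ∈ T, F a a ≠ 0) :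
    #T ≤ 2 * #s := by
  classical
  obtain ⟨u, v, hF⟩ := hF
  set W : Finset (X → K) := s.image u ∪ s.image e
  have hrows : Set.range (fun a : T => F a) ⊆ span K (W : Set (X → K)) := by
    rintro _ ⟨a, rfl⟩
    have : F a = ∑ k ∈ s, (e k a • u k + v k a • e k) := funext fun y => by
      simp [hF, Finset.sum_apply]
    show F a ∈ _
    rw [this]
    refine sum_mem fun k hk =>
      add_mem (smul_mem _ _ (subset_span ?_)) (smul_mem _ _ (subset_span ?_))
    · exact mem_union_left _ (mem_image_of_mem u hk)
    · exact mem_union_right _ (mem_image_of_mem e hk)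
  calc #T = finrank K (span K (Set.range fun a : T => F a)) := by
        rw [finrank_span_eq_card (linearIndependent_of_diagonal T hoff hdiag), Fintype.card_coe]
    _ ≤ finrank K (span K (W : Set (X → K))) := Submodule.finrank_mono (span_le.mpr hrows)
    _ ≤ #W := finrank_span_finset_le_card W
    _ ≤ #s + #s := (card_union_le _ _).trans (add_le_add card_image_le card_image_le)
    _ = 2 * #s := (two_mul _).symm

end SliceSpan

section Monomials

variable {K ι : Type*} [Fintype ι] [DecidableEq ι] {q : ℕ}

def monomialFun [CommRing K] (α : ι → Fin q) (x : ι → K) : K := ∏ i, x i ^ (α i : ℕ)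

variable (ι q) in
def lowExponents (D : ℕ) : Finset (ι → Fin q) := {α | 3 * ∑ i, (α i : ℕ) ≤ D}

@[simp]
theorem mem_lowExponents {D : ℕ} {α : ι → Fin q} :
    α ∈ lowExponents ι q D ↔ 3 * ∑ i, (α i : ℕ) ≤ D := by
  simp [lowExponents]

theorem card_compl_lowExponents_le :
    #(lowExponents ι q (2 * ((q - 1) * Fintype.card ι)))ᶜ ≤
      #(lowExponents ι q ((q - 1) * Fintype.card ι)) := by
  have hrev (α : ι → Fin q) :
      ∑ i, ((α i).rev : ℕ) + ∑ i, (α i : ℕ) = (q - 1) * Fintype.card ι := by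
    rw [← sum_add_distrib, mul_comm, ← smul_eq_mul, ← card_univ, ← sum_const]
    exact sum_congr rfl fun i _ => by have := (α i).2; rw [Fin.val_rev]; omega
  refine card_le_card_of_injOn (fun α i => (α i).rev) (fun α hα => ?_) fun α _ β _ h =>
    funext fun i => Fin.rev_injective (congrFun h i)
  simp only [coe_compl, Set.mem_compl_iff, mem_coe, mem_lowExponents, not_le] at hα ⊢
  have := hrev α
  omega

variable [CommRing K]

theorem monomialFun_add_mem_sliceSpan {D : ℕ} {α : ι → Fin q}
    (hα : 3 * ∑ i, (α i : ℕ) ≤ 2 * D) :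
    (fun x y => monomialFun α (x + y)) ∈
      sliceSpan (monomialFun (K := K)) (lowExponents ι q D) := by
  have hexp : (fun x y : ι → K => monomialFun α (x + y)) =
      ∑ b ∈ Fintype.piFinset fun i => range ((α i : ℕ) + 1), fun x y =>
        (∏ i, ((α i : ℕ).choose (b i) : K)) * (∏ i, x i ^ b i) * ∏ i, y i ^ ((α i : ℕ) - b i) := by
    funext x y
    simp only [monomialFun, Pi.add_apply, add_pow, prod_univ_sum, Finset.sum_apply]
    refine sum_congr rfl fun b _ => ?_
    simp only [prod_mul_distrib]
    ring
  rw [hexp]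
  refine sum_mem fun b hb => ?_
  have hbα (i : ι) : b i ≤ α i := Nat.lt_succ_iff.mp (mem_range.mp (Fintype.mem_piFinset.mp hb i))
  let β : ι → Fin q := fun i => ⟨b i, (hbα i).trans_lt (α i).2⟩
  let γ : ι → Fin q := fun i => ⟨α i - b i, (Nat.sub_le _ _).trans_lt (α i).2⟩
  have hdeg : ∑ i, (β i : ℕ) + ∑ i, (γ i : ℕ) = ∑ i, (α i : ℕ) := by
    rw [← sum_add_distrib]
    exact sum_congr rfl fun i _ => Nat.add_sub_cancel' (hbα i)
  -- `deg β + deg γ = deg α ≤ 2D/3`, so one of `β`, `γ` has degree `≤ D/3`.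
  by_cases hβ : 3 * ∑ i, (β i : ℕ) ≤ D
  · convert mul_left_mem_sliceSpan (mem_lowExponents.mpr hβ)
      (fun y => (∏ i, ((α i : ℕ).choose (b i) : K)) * monomialFun γ y) using 1
    funext x y
    simp only [monomialFun, β, γ]
    ring
  · have hγ : 3 * ∑ i, (γ i : ℕ) ≤ D := by omega
    convert mul_right_mem_sliceSpan (mem_lowExponents.mpr hγ)
      (fun x => (∏ i, ((α i : ℕ).choose (b i) : K)) * monomialFun β x) using 1
    funext x y
    simp only [monomialFun, β, γ]

theorem add_mem_sliceSpan_of_mem_span {D : ℕ} {f : (ι → K) → K}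
    (hf : f ∈ span K (monomialFun '' (lowExponents ι q (2 * D) : Set (ι → Fin q)))) :
    (fun x y => f (x + y)) ∈ sliceSpan monomialFun (lowExponents ι q D) := by
  induction hf using span_induction with
  | mem g hg =>
    obtain ⟨α, hα, rfl⟩ := hg
    exact monomialFun_add_mem_sliceSpan (mem_lowExponents.mp hα)
  | zero => exact zero_mem _
  | add g h _ _ hg hh => exact add_mem hg hh
  | smul c g _ hg => exact smul_mem _ c hg

end Monomials

section FiniteField

variable {K ι : Type*} [Field K] [Fintype K] [Fintype ι] {q : ℕ}

theorem span_range_monomialFun (hq : Fintype.card K = q) :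
    span K (Set.range (monomialFun : (ι → Fin q) → (ι → K) → K)) = ⊤ := by
  rw [eq_top_iff, ← MvPolynomial.map_restrict_dom_evalₗ, MvPolynomial.restrictDegree,
    MvPolynomial.restrictSupport_eq_span, map_span, span_le]
  rintro _ ⟨_, ⟨d, hd, rfl⟩, rfl⟩
  have hq0 : 0 < q := hq ▸ Fintype.card_pos
  refine subset_span ⟨fun i => ⟨d i, by have := hd i; omega⟩, funext fun x => ?_⟩
  simp [monomialFun, MvPolynomial.eval_monomial, Finsupp.prod_fintype]

end FiniteField

section CapSet

variable {K ι : Type*} [Field K] [Fintype K] [DecidableEq K] [Fintype ι] [DecidableEq ι] {q : ℕ}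

theorem finrank_span_inf_pi_le {D : ℕ} (A : Finset (ι → K))
    (hA : ∀ x ∈ A, ∀ y ∈ A, ∀ z ∈ A, x + y = 2 • z → x = y) :
    finrank K ↥(span K (monomialFun '' (lowExponents ι q (2 * D) : Set (ι → Fin q))) ⊓
      pi (↑(A.image (2 • ·)) : Set (ι → K))ᶜ fun _ => ⊥) ≤ 2 * #(lowExponents ι q D) := by
  refine (exists_mem_finrank_le_card_support _).elim fun f ⟨hfW, hsupp⟩ => hsupp.trans ?_
  obtain ⟨hfU, hfZ⟩ := mem_inf.mp hfW
  have hf_zero (v : ι → K) (hv : v ∉ A.image (2 • ·)) : f v = 0 := (mem_bot K).mp (hfZ v hv)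
  set T := {a ∈ A | f (2 • a) ≠ 0}
  have hsuppT : #{v | f v ≠ 0} ≤ #T := by
    refine (card_le_card (t := T.image (2 • ·)) fun v hv => ?_).trans card_image_le
    have hv : f v ≠ 0 := (mem_filter.mp hv).2
    obtain ⟨a, ha, rfl⟩ := mem_image.mp (not_imp_comm.mp (hf_zero v) hv)
    exact mem_image_of_mem _ (mem_filter.mpr ⟨ha, hv⟩)
  have hoff : ∀ a ∈ T, ∀ b ∈ T, a ≠ b → f (a + b) = 0 := by
    intro a ha b hb hab
    refine hf_zero _ fun hmem => hab ?_
    obtain ⟨c, hc, hcab⟩ := mem_image.mp hmem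
    exact hA a (mem_filter.mp ha).1 b (mem_filter.mp hb).1 c hc hcab.symm
  have hdiag : ∀ a ∈ T, f (a + a) ≠ 0 := fun a ha => by
    rw [← two_nsmul]; exact (mem_filter.mp ha).2
  exact hsuppT.trans (card_le_of_mem_sliceSpan (add_mem_sliceSpan_of_mem_span hfU) T hoff hdiag)

theorem card_image_two_nsmul_le (hq : Fintype.card K = q) (A : Finset (ι → K))
    (hA : ∀ x ∈ A, ∀ y ∈ A, ∀ z ∈ A, x + y = 2 • z → x = y) :
    #(A.image (2 • ·)) ≤ 3 * #(lowExponents ι q ((q - 1) * Fintype.card ι)) := by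
  set D := (q - 1) * Fintype.card ι
  set U := span K (monomialFun (K := K) '' (lowExponents ι q (2 * D) : Set (ι → Fin q)))
  set Z : Submodule K ((ι → K) → K) := pi (↑(A.image (2 • ·)) : Set (ι → K))ᶜ fun _ => ⊥
  have hU : finrank K ((ι → K) → K) ≤ finrank K U + #(lowExponents ι q D) :=
    (finrank_le_finrank_span_image_add_card_compl (span_range_monomialFun hq) _).trans
      (Nat.add_le_add_left card_compl_lowExponents_le _)
  have hZ : #(A.image (2 • ·)) ≤ finrank K Z := card_le_finrank_pi_compl_bot _
  have hUZ : finrank K ↥(U ⊓ Z) ≤ 2 * #(lowExponents ι q D) := finrank_span_inf_pi_le A hA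
  have := finrank_sup_add_finrank_inf_eq U Z
  have := (U ⊔ Z).finrank_le
  omega

end CapSet

theorem ellenberg_gijswijt {p : ℕ} (hp : p.Prime) {n : ℕ}
    (A : Finset (Fin n → ZMod p))
    (hAP : ∀ x ∈ A, ∀ y ∈ A, ∀ z ∈ A, x + y = 2 • z → x = y ∧ y = z) :
    A.card ≤ 3 * (Finset.univ.filter
      (fun α : Fin n → Fin p => 3 * ∑ i, (α i : ℕ) ≤ (p - 1) * n)).card := by
  have := Fact.mk hp
  have hinj : Set.InjOn (2 • ·) (A : Set (Fin n → ZMod p)) := fun a ha b hb hab =>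
    (hAP a ha a ha b hb (by rw [← two_nsmul]; exact hab)).2
  rw [← card_image_of_injOn hinj]
  have := card_image_two_nsmul_le (ZMod.card p) A fun x hx y hy z hz h => (hAP x hx y hy z hz h).1
  rwa [Fintype.card_fin] at this
end

section
/- For every prime p and integer k ≥ 3, any k-colored sum-free set in F_p^n has size at most k·N(n,p,(p-1)n/k), where N(n,p,r) = #{α ∈ ℕ^n : α_i ≤ p-1 ∀i, Σα_i ≤ r}. -/
open Finset

lemma ker_finrank_ge {F : Type} [Field F] {β σ : Type} [Fintype β] [Fintype σ]
    (Φ : (β → F) →ₗ[F] (σ → F)) :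
    Fintype.card β ≤ Fintype.card σ + Module.finrank F (LinearMap.ker Φ) := by
  have h1 := LinearMap.finrank_range_add_finrank_ker Φ
  have h2 : Module.finrank F (LinearMap.range Φ) ≤ Fintype.card σ := by
    simpa [Module.finrank_pi] using Submodule.finrank_le (LinearMap.range Φ)
  have h3 : Module.finrank F (β → F) = Fintype.card β := Module.finrank_pi F
  omega

lemma exists_large_support {F β : Type} [Field F] [DecidableEq F] [Fintype β] [DecidableEq β]
    (W : Submodule F (β → F)) :
    ∃ w ∈ W, Module.finrank F W ≤ (Finset.univ.filter (fun a => w a ≠ 0)).card := by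
  classical
  set s : Set ℕ := {m | ∃ w ∈ W, m = (Finset.univ.filter (fun a => w a ≠ 0)).card} with hs
  have hne : s.Nonempty := ⟨0, ⟨(0 : β → F), W.zero_mem, by simp⟩⟩
  have hbdd : BddAbove s := by
    refine ⟨Fintype.card β, ?_⟩
    rintro m ⟨w, _, rfl⟩
    exact le_trans (Finset.card_filter_le _ _) (by simp)
  obtain ⟨w, hwW, hwcard⟩ := Nat.sSup_mem hne hbdd
  refine ⟨w, hwW, ?_⟩
  rw [← hwcard]
  by_contra hlt
  push_neg at hlt
  -- hlt : sSup s < finrank W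
  set R : Finset β := Finset.univ.filter (fun a => w a ≠ 0) with hR
  -- restriction map from W to R → F
  let Φ : W →ₗ[F] (↥R → F) :=
    (LinearMap.funLeft F F (fun (a : ↥R) => (a : β))).comp W.subtype
  have hker : 0 < Module.finrank F (LinearMap.ker Φ) := by
    have h1 := LinearMap.finrank_range_add_finrank_ker Φ
    have h2 : Module.finrank F (LinearMap.range Φ) ≤ R.card := by
      simpa [Module.finrank_pi] using Submodule.finrank_le (LinearMap.range Φ)
    have h3 : Module.finrank F ↥W = Module.finrank F W := rfl
    have : R.card = sSup s := hwcard.symm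
    omega
  have hkne : LinearMap.ker Φ ≠ ⊥ := by
    intro hbot
    rw [hbot] at hker; simp at hker
  obtain ⟨u, humem, hune⟩ := Submodule.exists_mem_ne_zero_of_ne_bot hkne
  have huW : (u : β → F) ∈ W := u.2
  have huR : ∀ a ∈ R, (u : β → F) a = 0 := by
    intro a ha
    have := LinearMap.mem_ker.mp humem
    have := congrFun this ⟨a, ha⟩
    simpa [Φ, LinearMap.funLeft] using this
  have hune' : (u : β → F) ≠ 0 := by
    intro h; apply hune; exact Subtype.ext h
  obtain ⟨a₀, ha₀⟩ : ∃ a₀, (u : β → F) a₀ ≠ 0 := by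
    by_contra h; push_neg at h; exact hune' (funext h)
  have ha₀R : a₀ ∉ R := fun h => ha₀ (huR a₀ h)
  -- w + u has bigger support
  have hsub : insert a₀ R ⊆ Finset.univ.filter (fun a => (w + (u : β → F)) a ≠ 0) := by
    intro a ha
    rcases Finset.mem_insert.mp ha with rfl | haR
    · have hw0 : w a = 0 := by
        by_contra h; exact ha₀R (by simp [hR, h])
      simp [hw0, ha₀]
    · have hu0 : (u : β → F) a = 0 := huR a haR
      have hwne : w a ≠ 0 := by simpa [hR] using haR
      simp [hu0, hwne]
  have hcard : R.card + 1 ≤ (Finset.univ.filter (fun a => (w + (u : β → F)) a ≠ 0)).card := by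
    calc R.card + 1 = (insert a₀ R).card := (Finset.card_insert_of_notMem ha₀R).symm
    _ ≤ _ := Finset.card_le_card hsub
  have hmem : (Finset.univ.filter (fun a => (w + (u : β → F)) a ≠ 0)).card ∈ s :=
    ⟨w + u, W.add_mem hwW huW, rfl⟩
  have := le_csSup hbdd hmem
  omega

lemma two_elt_eq {κ : Type} [Fintype κ] [DecidableEq κ] (h : Fintype.card κ = 2)
    {a b c : κ} (hab : a ≠ b) (hcb : c ≠ b) : c = a := by
  by_contra hca
  have h3 : ({c, a, b} : Finset κ).card = 3 := by
    rw [Finset.card_insert_of_notMem (by simp [hca, hcb]),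
      Finset.card_insert_of_notMem (by simp [hab]), Finset.card_singleton]
  have := Finset.card_le_univ ({c, a, b} : Finset κ)
  rw [h3, h] at this
  omega

theorem slice_core {F : Type} [Field F] [DecidableEq F] :
    ∀ (N : ℕ) {κ : Type} [Fintype κ] [DecidableEq κ], Fintype.card κ ≤ N →
      2 ≤ Fintype.card κ →
      ∀ {A ι : Type} [Fintype A] [DecidableEq A] (S : Finset ι)
        (dir : ι → κ) (f : ι → A → F) (g : ι → (κ → A) → F),
        (∀ s ∈ S, ∀ j j' : κ → A, (∀ i, i ≠ dir s → j i = j' i) → g s j = g s j') →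
        ∀ (D : Finset A) (c : A → F), (∀ a ∈ D, c a ≠ 0) →
        (∀ a : A, ∑ s ∈ S, f s a * g s (fun _ => a) = if a ∈ D then c a else 0) →
        (∀ j : κ → A, (∃ i i', j i ≠ j i') → ∑ s ∈ S, f s (j (dir s)) * g s j = 0) →
        D.card ≤ S.card := by
  intro N
  induction N with
  | zero => intro κ _ _ hle h2; omega
  | succ N ih =>
    intro κ _ _ hle h2 A ι _ _ S dir f g hg D c hc hdiag hoff
    classical
    rcases isEmpty_or_nonempty A with hA | hA
    · have hD0 : D.card ≤ Fintype.card A := Finset.card_le_univ D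
      simp only [Fintype.card_eq_zero] at hD0
      omega
    obtain ⟨i₀⟩ : Nonempty κ := Fintype.card_pos_iff.mp (by omega)
    obtain ⟨i₁, hi₁⟩ : ∃ i₁ : κ, i₁ ≠ i₀ :=
      Fintype.exists_ne_of_one_lt_card (by omega) i₀
    by_cases hbase : Fintype.card κ = 2
    · -- BASE CASE: card κ = 2
      by_contra hlt
      push_neg at hlt
      set ψ : ι → A → F := fun s a => if dir s = i₀ then f s a else g s (fun _ => a) with hψ
      let Φ : (↥D → F) →ₗ[F] (↥S → F) :=
        { toFun := fun v s => ∑ a : ↥D, v a * ψ s.1 a.1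
          map_add' := by
            intro v w; funext s
            simp [add_mul, Finset.sum_add_distrib]
          map_smul' := by
            intro r v; funext s
            simp [Finset.mul_sum, mul_assoc] }
      have hker : 0 < Module.finrank F (LinearMap.ker Φ) := by
        have h1 := ker_finrank_ge Φ
        rw [Fintype.card_coe, Fintype.card_coe] at h1
        omega
      have hkne : LinearMap.ker Φ ≠ ⊥ := by
        intro hbot; rw [hbot] at hker; simp at hker
      obtain ⟨v, hvker, hvne⟩ := Submodule.exists_mem_ne_zero_of_ne_bot hkne
      have hv : ∀ s ∈ S, ∑ a : ↥D, v a * ψ s a.1 = 0 := by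
        intro s hs
        have := congrFun (LinearMap.mem_ker.mp hvker) ⟨s, hs⟩
        simpa [Φ] using this
      apply hvne
      funext b
      have key : v b * c b.1 = 0 := by
        have hEb : ∀ a : ↥D,
            (∑ s ∈ S, f s ((fun i => if i = i₀ then (a : A) else (b : A)) (dir s)) *
              g s (fun i => if i = i₀ then (a : A) else (b : A)))
            = if (a : A) = (b : A) then c b.1 else 0 := by
          intro a
          by_cases hab : (a : A) = (b : A)
          · have hj : (fun i => if i = i₀ then (a : A) else (b : A)) = fun _ => (b : A) := by
              funext i; by_cases hi : i = i₀ <;> simp [hi, hab]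
            rw [hj, hdiag, if_pos b.2, if_pos hab]
          · rw [if_neg hab]
            exact hoff (fun i => if i = i₀ then (a : A) else (b : A))
              ⟨i₀, i₁, by simpa [hi₁] using hab⟩
        have hE2 : (∑ a : ↥D, v a *
            (∑ s ∈ S, f s ((fun i => if i = i₀ then (a : A) else (b : A)) (dir s)) *
              g s (fun i => if i = i₀ then (a : A) else (b : A)))) = v b * c b.1 := by
          rw [Fintype.sum_eq_single b]
          · rw [hEb b, if_pos rfl]
          · intro x hx
            rw [hEb x, if_neg (fun hxx => hx (Subtype.ext hxx)), mul_zero]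
        rw [← hE2]
        simp_rw [Finset.mul_sum]
        rw [Finset.sum_comm]
        apply Finset.sum_eq_zero
        intro s hs
        by_cases hd : dir s = i₀
        · have hterm : ∀ a : ↥D,
              v a * (f s ((fun i => if i = i₀ then (a : A) else (b : A)) (dir s)) *
                g s (fun i => if i = i₀ then (a : A) else (b : A)))
              = (v a * ψ s a.1) * g s (fun _ => (b : A)) := by
            intro a
            have hgc : g s (fun i => if i = i₀ then (a : A) else (b : A))
                = g s (fun _ => (b : A)) := by
              apply hg s hs
              intro i hi
              rw [if_neg (fun hii => hi (hii.trans hd.symm))]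
            rw [hgc]
            simp only [hd, if_pos rfl, hψ, if_true, mul_assoc]
          rw [Finset.sum_congr rfl (fun a _ => hterm a), ← Finset.sum_mul, hv s hs, zero_mul]
        · have hterm : ∀ a : ↥D,
              v a * (f s ((fun i => if i = i₀ then (a : A) else (b : A)) (dir s)) *
                g s (fun i => if i = i₀ then (a : A) else (b : A)))
              = f s (b : A) * (v a * ψ s a.1) := by
            intro a
            have hgc : g s (fun i => if i = i₀ then (a : A) else (b : A))
                = g s (fun _ => (a : A)) := by
              apply hg s hs
              intro i hi
              have hii₀ : i = i₀ := two_elt_eq hbase (Ne.symm hd) hi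
              rw [if_pos hii₀]
            rw [hgc]
            simp only [if_neg hd, hψ]
            ring
          rw [Finset.sum_congr rfl (fun a _ => hterm a), ← Finset.mul_sum, hv s hs, mul_zero]
      have hcb := hc b.1 b.2
      rcases mul_eq_zero.mp key with h0 | h0
      · exact h0
      · exact absurd h0 hcb
    · -- STEP CASE: 3 ≤ card κ
      have h3 : 3 ≤ Fintype.card κ := by omega
      set S₀ := S.filter (fun s => dir s = i₀) with hS₀
      set S₁ := S.filter (fun s => ¬ dir s = i₀) with hS₁
      have hS01 : S₀.card + S₁.card = S.card :=
        Finset.card_filter_add_card_filter_not (fun s => dir s = i₀)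
      have hS₁S : ∀ s ∈ S₁, s ∈ S := fun s hs => (Finset.mem_filter.mp hs).1
      have hS₁d : ∀ s ∈ S₁, ¬ dir s = i₀ := fun s hs => (Finset.mem_filter.mp hs).2
      let Φ : (A → F) →ₗ[F] ((↥(Dᶜ) ⊕ ↥S₀) → F) :=
        { toFun := fun w => Sum.elim (fun a => w a.1) (fun s => ∑ a : A, w a * f s.1 a)
          map_add' := by
            intro v w; funext x
            cases x <;> simp [add_mul, Finset.sum_add_distrib]
          map_smul' := by
            intro r v; funext x
            cases x <;> simp [Finset.mul_sum, mul_assoc] }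
      obtain ⟨h, hhW, hhrank⟩ := exists_large_support (LinearMap.ker Φ)
      have hsupp : ∀ a : A, a ∉ D → h a = 0 := by
        intro a ha
        have := congrFun (LinearMap.mem_ker.mp hhW) (Sum.inl ⟨a, by simpa using ha⟩)
        simpa [Φ] using this
      have hcons : ∀ s ∈ S₀, ∑ a : A, h a * f s a = 0 := by
        intro s hs
        have := congrFun (LinearMap.mem_ker.mp hhW) (Sum.inr ⟨s, hs⟩)
        simpa [Φ] using this
      have hrank : D.card ≤ S₀.card + Module.finrank F (LinearMap.ker Φ) := by
        have h1 := ker_finrank_ge Φ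
        rw [Fintype.card_sum, Fintype.card_coe, Fintype.card_coe, Finset.card_compl] at h1
        have hDle : D.card ≤ Fintype.card A := Finset.card_le_univ D
        omega
      set D₂ := D.filter (fun a => h a ≠ 0) with hD₂
      have hD₂eq : Finset.univ.filter (fun a => h a ≠ 0) = D₂ := by
        ext a
        simp only [hD₂, Finset.mem_filter, Finset.mem_univ, true_and]
        constructor
        · intro hne
          refine ⟨?_, hne⟩
          by_contra hD
          exact hne (hsupp a hD)
        · exact fun h => h.2
      have hD₂rank : Module.finrank F (LinearMap.ker Φ) ≤ D₂.card := by
        rw [← hD₂eq]; exact hhrank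
      -- new structures on κ' = {i // ¬ i = i₀}
      have hκ' : Fintype.card {i : κ // ¬ i = i₀} = Fintype.card κ - 1 := by
        rw [Fintype.card_subtype_compl, Fintype.card_subtype_eq]
      set Ext : ({i : κ // ¬ i = i₀} → A) → A → κ → A :=
        fun j' a i => if hh : i = i₀ then a else j' ⟨i, hh⟩ with hExt
      set dir' : ι → {i : κ // ¬ i = i₀} :=
        fun s => if hh : dir s = i₀ then ⟨i₁, hi₁⟩ else ⟨dir s, hh⟩ with hdir'
      set g' : ι → (({i : κ // ¬ i = i₀}) → A) → F :=
        fun s j' => ∑ a : A, h a * g s (Ext j' a) with hg'def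
      have hdir'eq : ∀ s ∈ S₁, (dir' s : κ) = dir s := by
        intro s hs
        simp only [hdir']
        rw [dif_neg (hS₁d s hs)]
      -- KEY identity
      have KEY : ∀ j' : {i : κ // ¬ i = i₀} → A,
          ∑ s ∈ S₁, f s (j' (dir' s)) * g' s j'
          = ∑ a : A, h a * ∑ s ∈ S, f s (Ext j' a (dir s)) * g s (Ext j' a) := by
        intro j'
        simp_rw [Finset.mul_sum]
        rw [Finset.sum_comm]
        rw [← Finset.sum_filter_add_sum_filter_not S (fun s => dir s = i₀)]
        have hzero : ∑ s ∈ S₀, ∑ a : A, h a * (f s (Ext j' a (dir s)) * g s (Ext j' a)) = 0 := by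
          apply Finset.sum_eq_zero
          intro s hs
          have hsS : s ∈ S := (Finset.mem_filter.mp hs).1
          have hsd : dir s = i₀ := (Finset.mem_filter.mp hs).2
          have hgind : ∀ a : A, g s (Ext j' a) = g s (Ext j' (Classical.arbitrary A)) := by
            intro a
            apply hg s hsS
            intro i hi
            have hii : ¬ i = i₀ := fun hii => hi (hii.trans hsd.symm)
            rw [hExt]
            simp only [dif_neg hii]
          have hterm : ∀ a : A, h a * (f s (Ext j' a (dir s)) * g s (Ext j' a))
              = (h a * f s a) * g s (Ext j' (Classical.arbitrary A)) := by
            intro a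
            rw [hgind a]
            have : Ext j' a (dir s) = a := by rw [hExt]; simp only [hsd, dif_pos rfl, dite_true]
            rw [this, mul_assoc]
          rw [Finset.sum_congr rfl (fun a _ => hterm a), ← Finset.sum_mul, hcons s hs, zero_mul]
        rw [hzero, zero_add]
        apply Finset.sum_congr rfl
        intro s hs
        have hterm : ∀ a : A, h a * (f s (Ext j' a (dir s)) * g s (Ext j' a))
            = f s (j' (dir' s)) * (h a * g s (Ext j' a)) := by
          intro a
          have hE : Ext j' a (dir s) = j' (dir' s) := by
            rw [hExt]
            simp only [dif_neg (hS₁d s hs)]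
            congr 1
            exact Subtype.ext (hdir'eq s hs).symm
          rw [hE]; ring
        rw [Finset.sum_congr rfl (fun a _ => hterm a), ← Finset.mul_sum]
      -- new hypotheses
      have hg'' : ∀ s ∈ S₁, ∀ j₁ j₂ : {i : κ // ¬ i = i₀} → A,
          (∀ i, i ≠ dir' s → j₁ i = j₂ i) → g' s j₁ = g' s j₂ := by
        intro s hs j₁ j₂ hagree
        rw [hg'def]
        apply Finset.sum_congr rfl
        intro a _
        congr 1
        apply hg s (hS₁S s hs)
        intro i hi
        rw [hExt]
        by_cases hii : i = i₀
        · simp only [dif_pos hii]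
        · simp only [dif_neg hii]
          apply hagree
          intro heq
          apply hi
          rw [← hdir'eq s hs, ← heq]
      have hc' : ∀ a ∈ D₂, h a * c a ≠ 0 := by
        intro a ha
        have := Finset.mem_filter.mp ha
        exact mul_ne_zero this.2 (hc a this.1)
      have hdiag' : ∀ b : A,
          ∑ s ∈ S₁, f s b * g' s (fun _ => b) = if b ∈ D₂ then h b * c b else 0 := by
        intro b
        have hfb : ∀ s ∈ S₁, f s ((fun _ => b) (dir' s)) * g' s (fun _ => b)
            = f s b * g' s (fun _ => b) := fun s _ => rfl
        rw [← Finset.sum_congr rfl hfb, KEY (fun _ => b)]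
        have hinner : ∀ a : A, (∑ s ∈ S, f s (Ext (fun _ => b) a (dir s)) *
            g s (Ext (fun _ => b) a)) = if a = b then (if b ∈ D then c b else 0) else 0 := by
          intro a
          by_cases hab : a = b
          · subst hab
            have hEb : Ext (fun _ => a) a = fun _ => a := by
              funext i
              rw [hExt]
              by_cases hii : i = i₀ <;> simp [hii]
            rw [if_pos rfl, hEb, hdiag a]
          · rw [if_neg hab]
            apply hoff
            refine ⟨i₀, i₁, ?_⟩
            have h1 : Ext (fun _ => b) a i₀ = a := by rw [hExt]; simp
            have h2 : Ext (fun _ => b) a i₁ = b := by rw [hExt]; simp [hi₁]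
            rw [h1, h2]; exact hab
        rw [Finset.sum_congr rfl (fun a _ => by rw [hinner a])]
        rw [Fintype.sum_eq_single b (fun x hx => by rw [if_neg hx, mul_zero])]
        rw [if_pos rfl]
        by_cases hbD : b ∈ D
        · by_cases hb0 : h b = 0
          · simp [hD₂, hbD, hb0]
          · simp [hD₂, hbD, hb0]
        · have : h b = 0 := hsupp b hbD
          simp [hD₂, hbD, this]
      have hoff' : ∀ j' : {i : κ // ¬ i = i₀} → A, (∃ i i', j' i ≠ j' i') →
          ∑ s ∈ S₁, f s (j' (dir' s)) * g' s j' = 0 := by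
        intro j' ⟨i, i', hii⟩
        rw [KEY j']
        apply Finset.sum_eq_zero
        intro a _
        rw [hoff (Ext j' a) ?_, mul_zero]
        refine ⟨i.1, i'.1, ?_⟩
        have h1 : Ext j' a i.1 = j' i := by
          rw [hExt]; simp only [dif_neg i.2]
        have h2 : Ext j' a i'.1 = j' i' := by
          rw [hExt]; simp only [dif_neg i'.2]
        rw [h1, h2]; exact hii
      -- apply induction hypothesis
      have hind := ih (κ := {i : κ // ¬ i = i₀}) (by omega) (by omega)
        S₁ dir' f g' hg'' D₂ (fun b => h b * c b) hc' hdiag' hoff'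
      omega

open Finset MvPolynomial

lemma support_prod_decompose {σ R γ : Type} [CommRing R] [DecidableEq σ] [DecidableEq γ]
    (s : Finset γ) (Q : γ → MvPolynomial σ R) :
    ∀ d ∈ (∏ t ∈ s, Q t).support, ∃ e : γ → (σ →₀ ℕ),
      (∀ t ∈ s, e t ∈ (Q t).support) ∧ d = ∑ t ∈ s, e t := by
  induction s using Finset.induction with
  | empty =>
    intro d hd
    rw [Finset.prod_empty] at hd
    have hd0 : d = 0 := by
      by_contra h0
      have hh := MvPolynomial.mem_support_iff.mp hd
      rw [MvPolynomial.coeff_one, if_neg (fun h => h0 h.symm)] at hh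
      exact hh rfl
    exact ⟨fun _ => 0, fun t ht => absurd ht (Finset.notMem_empty t), by simp [hd0]⟩
  | @insert a s hat ih =>
    intro d hd
    rw [Finset.prod_insert hat] at hd
    obtain ⟨d1, hd1, d2, hd2, hsum⟩ := Finset.mem_add.mp (MvPolynomial.support_mul _ _ hd)
    obtain ⟨e, he, rfl⟩ := ih d2 hd2
    refine ⟨fun t => if t = a then d1 else e t, fun t ht => ?_, ?_⟩
    · show (if t = a then d1 else e t) ∈ (Q t).support
      rcases Finset.mem_insert.mp ht with rfl | hts
      · simpa using hd1
      · have hta : t ≠ a := fun h => hat (h ▸ hts)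
        rw [if_neg hta]; exact he t hts
    · show d = ∑ t ∈ insert a s, (if t = a then d1 else e t)
      rw [← hsum, Finset.sum_insert hat, if_pos rfl]
      congr 1
      apply Finset.sum_congr rfl
      intro t ht
      have hta : t ≠ a := fun h => hat (h ▸ ht)
      rw [if_neg hta]
theorem k_colored_sum_free_bound {p : ℕ} (hp : p.Prime) {n : ℕ}
    (k : ℕ) (hk : 3 ≤ k) (M : ℕ)
    (x : Fin k → Fin M → (Fin n → ZMod p))
    (hsf : ∀ j : Fin k → Fin M,
      (∑ i, x i (j i)) = 0 ↔ ∀ i i' : Fin k, j i = j i') :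
    M ≤ k * (Finset.univ.filter
      (fun α : Fin n → Fin p => k * ∑ i, (α i : ℕ) ≤ (p - 1) * n)).card := by
  classical
  haveI : Fact p.Prime := ⟨hp⟩
  have hp2 : 2 ≤ p := hp.two_le
  set q : MvPolynomial (Fin k) (ZMod p) := 1 - (∑ i : Fin k, X i) ^ (p - 1) with hq
  set P : MvPolynomial (Fin k × Fin n) (ZMod p) :=
    ∏ t : Fin n, rename (fun i => (i, t)) q with hP
  -- total degree bound for monomials of q
  have hqdeg : ∀ e ∈ q.support, (e.sum fun _ m => m) ≤ p - 1 := by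
    intro e he
    have hfdeg : ((∑ i : Fin k, X i : MvPolynomial (Fin k) (ZMod p)) ^ (p - 1)).totalDegree
        ≤ p - 1 := by
      refine le_trans (totalDegree_pow _ _) ?_
      have h1 : (∑ i : Fin k, (X i : MvPolynomial (Fin k) (ZMod p))).totalDegree ≤ 1 :=
        le_trans (totalDegree_finset_sum _ _)
          (Finset.sup_le (fun i _ => le_of_eq (totalDegree_X i)))
      calc (p-1) * (∑ i : Fin k, (X i : MvPolynomial (Fin k) (ZMod p))).totalDegree
          ≤ (p-1) * 1 := Nat.mul_le_mul_left _ h1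
        _ = p - 1 := Nat.mul_one _
    by_cases hef : e ∈ ((∑ i : Fin k, X i : MvPolynomial (Fin k) (ZMod p)) ^ (p - 1)).support
    · exact le_trans (le_totalDegree hef) hfdeg
    · have hne := mem_support_iff.mp he
      rw [hq, coeff_sub, notMem_support_iff.mp hef, sub_zero, coeff_one] at hne
      by_cases h0 : (0 : Fin k →₀ ℕ) = e
      · rw [← h0]; simp
      · rw [if_neg h0] at hne; exact absurd rfl hne
  -- per-coordinate degree bound for monomials of P
  have hPdeg : ∀ d ∈ P.support, ∀ t : Fin n, (∑ i : Fin k, d (i, t)) ≤ p - 1 := by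
    intro d hd t
    obtain ⟨e, he, rfl⟩ := support_prod_decompose Finset.univ
      (fun t => rename (fun i : Fin k => (i, t)) q) d hd
    have hinj : ∀ t' : Fin n, Function.Injective (fun i : Fin k => (i, t')) :=
      fun t' a b hab => by simpa using congrArg Prod.fst hab
    have hmem : ∀ t' : Fin n, ∃ e' : Fin k →₀ ℕ,
        ((e'.sum fun _ m => m) ≤ p - 1) ∧ e t' = Finsupp.mapDomain (fun i => (i, t')) e' := by
      intro t'
      have h1 := he t' (Finset.mem_univ t')
      rw [support_rename_of_injective (hinj t')] at h1
      obtain ⟨e', he', heq⟩ := Finset.mem_image.mp h1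
      exact ⟨e', hqdeg e' he', heq.symm⟩
    have happ : ∀ (t' : Fin n) (i : Fin k) (tt : Fin n), tt ≠ t' → (e t') (i, tt) = 0 := by
      intro t' i tt htt
      obtain ⟨e', _, heq⟩ := hmem t'
      rw [heq]
      apply Finsupp.mapDomain_notin_range
      rintro ⟨i', hh⟩
      exact htt (by simpa using (congrArg Prod.snd hh).symm)
    have hsum_t : ∀ t' : Fin n, (∑ i : Fin k, (e t') (i, t')) ≤ p - 1 := by
      intro t'
      obtain ⟨e', hle, heq⟩ := hmem t'
      have hv : ∀ i : Fin k, (e t') (i, t') = e' i := fun i => by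
        rw [heq]; exact Finsupp.mapDomain_apply (hinj t') e' i
      rw [Finset.sum_congr rfl (fun i _ => hv i)]
      rw [Finsupp.sum_fintype _ _ (fun _ => rfl)] at hle
      exact hle
    have hco : (∑ i : Fin k, (∑ t' : Fin n, e t') (i, t))
        = ∑ i : Fin k, ∑ t' : Fin n, (e t') (i, t) := by
      apply Finset.sum_congr rfl
      intro i _
      rw [Finsupp.finset_sum_apply]
    rw [hco, Finset.sum_comm]
    rw [Fintype.sum_eq_single t
      (fun t' ht' => Finset.sum_eq_zero (fun i _ => happ t' i t (Ne.symm ht')))]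
    exact hsum_t t
  -- evaluation of P
  have hevalP : ∀ v : Fin k × Fin n → ZMod p,
      eval v P = ∏ t : Fin n, (1 - (∑ i : Fin k, v (i, t)) ^ (p - 1)) := by
    intro v
    rw [hP, map_prod]
    apply Finset.prod_congr rfl
    intro t _
    rw [eval_rename, hq]
    simp only [map_sub, map_one, map_pow, map_sum, eval_X, Function.comp]
  have hind : ∀ w : ZMod p, (1 - w ^ (p - 1)) = if w = 0 then 1 else 0 := by
    intro w
    by_cases hw : w = 0
    · rw [if_pos hw, hw, zero_pow (by omega), sub_zero]
    · rw [if_neg hw, ZMod.pow_card_sub_one_eq_one hw, sub_self]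
  -- value of the tensor
  have hT : ∀ j : Fin k → Fin M,
      eval (fun r : Fin k × Fin n => x r.1 (j r.1) r.2) P
      = if (∀ i i' : Fin k, j i = j i') then 1 else 0 := by
    intro j
    rw [hevalP]
    have hcond : (∀ t : Fin n, (∑ i : Fin k, x i (j i) t) = 0) ↔ (∀ i i' : Fin k, j i = j i') := by
      rw [← hsf j, funext_iff]
      apply forall_congr'
      intro t
      rw [Finset.sum_apply, Pi.zero_apply]
    rw [← if_congr hcond rfl rfl]
    by_cases hall : ∀ t : Fin n, (∑ i : Fin k, x i (j i) t) = 0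
    · rw [if_pos hall]
      apply Finset.prod_eq_one
      intro t _
      rw [hind, if_pos (hall t)]
    · rw [if_neg hall]
      push_neg at hall
      obtain ⟨t₀, ht₀⟩ := hall
      apply Finset.prod_eq_zero (Finset.mem_univ t₀)
      rw [hind, if_neg ht₀]
  have hTsum : ∀ j : Fin k → Fin M,
      eval (fun r : Fin k × Fin n => x r.1 (j r.1) r.2) P
      = ∑ d ∈ P.support, P.coeff d * ∏ r : Fin k × Fin n, (x r.1 (j r.1) r.2) ^ d r :=
    fun j => eval_eq' _ _
  -- pigeonhole: a light direction for each monomial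
  have hpig : ∀ d ∈ P.support, ∃ i : Fin k, k * (∑ t : Fin n, d (i, t)) ≤ (p - 1) * n := by
    intro d hd
    by_contra hcon
    push_neg at hcon
    have h2 : (∑ i : Fin k, ∑ t : Fin n, d (i, t)) ≤ n * (p - 1) := by
      rw [Finset.sum_comm]
      calc ∑ t : Fin n, ∑ i : Fin k, d (i, t)
          ≤ ∑ _t : Fin n, (p - 1) := Finset.sum_le_sum (fun t _ => hPdeg d hd t)
        _ = n * (p - 1) := by
            rw [Finset.sum_const, Finset.card_univ, Fintype.card_fin, smul_eq_mul]
    have h3 : k * ((p - 1) * n + 1) ≤ k * ∑ i : Fin k, ∑ t : Fin n, d (i, t) := by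
      rw [Finset.mul_sum]
      calc k * ((p - 1) * n + 1) = ∑ _i : Fin k, ((p - 1) * n + 1) := by
            rw [Finset.sum_const, Finset.card_univ, Fintype.card_fin, smul_eq_mul]
        _ ≤ _ := Finset.sum_le_sum (fun i _ => hcon i)
    have h4 := le_trans h3 (Nat.mul_le_mul_left k h2)
    have h5 : (p - 1) * n + 1 ≤ n * (p - 1) := Nat.le_of_mul_le_mul_left h4 (by omega)
    rw [Nat.mul_comm] at h5
    omega
  -- classification data
  set idx : ((Fin k × Fin n) →₀ ℕ) → Fin k := fun d =>
    if hh : ∃ i : Fin k, k * (∑ t : Fin n, d (i, t)) ≤ (p - 1) * n then hh.choose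
    else ⟨0, by omega⟩ with hidx
  set alp : ((Fin k × Fin n) →₀ ℕ) → (Fin n → Fin p) := fun d t =>
    ⟨min (d (idx d, t)) (p - 1), lt_of_le_of_lt (Nat.min_le_right _ _) (by omega)⟩ with halp
  have hidxd : ∀ d ∈ P.support, k * (∑ t : Fin n, d (idx d, t)) ≤ (p - 1) * n := by
    intro d hd
    have hh := hpig d hd
    rw [hidx]
    simp only [dif_pos hh]
    exact hh.choose_spec
  have halpd : ∀ d ∈ P.support, ∀ t : Fin n, ((alp d t : ℕ)) = d (idx d, t) := by
    intro d hd t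
    rw [halp]
    simp only
    apply Nat.min_eq_left
    calc d (idx d, t) ≤ ∑ i : Fin k, d (i, t) :=
          Finset.single_le_sum (f := fun i : Fin k => d (i, t))
            (fun i _ => Nat.zero_le _) (Finset.mem_univ _)
      _ ≤ p - 1 := hPdeg d hd t
  -- slices
  set Scond : Finset (Fin n → Fin p) := Finset.univ.filter
    (fun α : Fin n → Fin p => k * ∑ i, (α i : ℕ) ≤ (p - 1) * n) with hScond
  set S : Finset (Fin k × (Fin n → Fin p)) := Finset.univ ×ˢ Scond with hS
  set fS : (Fin k × (Fin n → Fin p)) → Fin M → ZMod p :=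
    fun s a => ∏ t : Fin n, (x s.1 a t) ^ ((s.2 t : ℕ)) with hfS
  set gS : (Fin k × (Fin n → Fin p)) → (Fin k → Fin M) → ZMod p :=
    fun s j => ∑ d ∈ P.support.filter (fun d => (idx d, alp d) = s),
      P.coeff d * ∏ r ∈ Finset.univ.filter (fun r : Fin k × Fin n => ¬ r.1 = s.1),
        (x r.1 (j r.1) r.2) ^ d r with hgS
  have hmaps : ∀ d ∈ P.support, (idx d, alp d) ∈ S := by
    intro d hd
    rw [hS, Finset.mem_product]
    refine ⟨Finset.mem_univ _, ?_⟩
    rw [hScond, Finset.mem_filter]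
    refine ⟨Finset.mem_univ _, ?_⟩
    have : (∑ i : Fin n, ((alp d i : ℕ))) = ∑ t : Fin n, d (idx d, t) :=
      Finset.sum_congr rfl (fun t _ => halpd d hd t)
    rw [this]
    exact hidxd d hd
  -- the main decomposition identity
  have hmain : ∀ j : Fin k → Fin M,
      (∑ s ∈ S, fS s (j s.1) * gS s j)
      = ∑ d ∈ P.support, P.coeff d * ∏ r : Fin k × Fin n, (x r.1 (j r.1) r.2) ^ d r := by
    intro j
    have step1 : ∀ s ∈ S, fS s (j s.1) * gS s j
        = ∑ d ∈ P.support.filter (fun d => (idx d, alp d) = s),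
          P.coeff d * ∏ r : Fin k × Fin n, (x r.1 (j r.1) r.2) ^ d r := by
      intro s _
      rw [hgS]
      simp only
      rw [Finset.mul_sum]
      apply Finset.sum_congr rfl
      intro d hd
      obtain ⟨hdP, hds⟩ := Finset.mem_filter.mp hd
      subst hds
      have hfull : (∏ r : Fin k × Fin n, (x r.1 (j r.1) r.2) ^ d r)
          = (∏ r ∈ Finset.univ.filter (fun r : Fin k × Fin n => r.1 = idx d),
              (x r.1 (j r.1) r.2) ^ d r)
            * ∏ r ∈ Finset.univ.filter (fun r : Fin k × Fin n => ¬ r.1 = idx d),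
              (x r.1 (j r.1) r.2) ^ d r :=
        (Finset.prod_filter_mul_prod_filter_not _ _ _).symm
      have hfst : (∏ r ∈ Finset.univ.filter (fun r : Fin k × Fin n => r.1 = idx d),
          (x r.1 (j r.1) r.2) ^ d r) = fS (idx d, alp d) (j (idx d)) := by
        rw [hfS]
        simp only
        have hset : Finset.univ.filter (fun r : Fin k × Fin n => r.1 = idx d)
            = {idx d} ×ˢ Finset.univ := by
          ext r
          simp only [Finset.mem_filter, Finset.mem_univ, true_and, Finset.mem_product,
            Finset.mem_singleton, and_true]
        rw [hset, Finset.prod_product, Finset.prod_singleton]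
        apply Finset.prod_congr rfl
        intro t _
        congr 1
        exact (halpd d hdP t).symm
      rw [hfull, hfst]
      ring
    rw [Finset.sum_congr rfl step1]
    exact Finset.sum_fiberwise_of_maps_to hmaps _
  -- apply the slice rank bound
  have hcardk : Fintype.card (Fin k) ≤ k := le_of_eq (Fintype.card_fin k)
  have hcardk2 : 2 ≤ Fintype.card (Fin k) := by rw [Fintype.card_fin]; omega
  have hgdep : ∀ s ∈ S, ∀ j j' : Fin k → Fin M,
      (∀ i : Fin k, i ≠ s.1 → j i = j' i) → gS s j = gS s j' := by
    intro s _ j j' hagree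
    rw [hgS]
    simp only
    apply Finset.sum_congr rfl
    intro d _
    congr 1
    apply Finset.prod_congr rfl
    intro r hr
    rw [hagree r.1 (Finset.mem_filter.mp hr).2]
  have hdiag : ∀ a : Fin M,
      (∑ s ∈ S, fS s a * gS s (fun _ => a))
      = if a ∈ (Finset.univ : Finset (Fin M)) then (fun _ : Fin M => (1 : ZMod p)) a else 0 := by
    intro a
    rw [if_pos (Finset.mem_univ a)]
    calc (∑ s ∈ S, fS s a * gS s (fun _ => a))
        = ∑ d ∈ P.support, P.coeff d *
            ∏ r : Fin k × Fin n, (x r.1 ((fun _ : Fin k => a) r.1) r.2) ^ d r := hmain (fun _ => a)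
      _ = eval (fun r : Fin k × Fin n => x r.1 ((fun _ : Fin k => a) r.1) r.2) P :=
          (hTsum (fun _ => a)).symm
      _ = (1 : ZMod p) := by rw [hT (fun _ => a), if_pos (fun i i' => rfl)]
  have hoff : ∀ j : Fin k → Fin M, (∃ i i' : Fin k, j i ≠ j i') →
      (∑ s ∈ S, fS s (j s.1) * gS s j) = 0 := by
    intro j ⟨i, i', hne⟩
    calc (∑ s ∈ S, fS s (j s.1) * gS s j)
        = ∑ d ∈ P.support, P.coeff d *
            ∏ r : Fin k × Fin n, (x r.1 (j r.1) r.2) ^ d r := hmain j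
      _ = eval (fun r : Fin k × Fin n => x r.1 (j r.1) r.2) P := (hTsum j).symm
      _ = 0 := by
          rw [hT j, if_neg]
          intro hall
          exact hne (hall i i')
  have happly := slice_core k hcardk hcardk2 S (fun s => s.1) fS gS hgdep
    (Finset.univ : Finset (Fin M)) (fun _ => 1) (fun a _ => one_ne_zero) hdiag hoff
  rw [Finset.card_univ, Fintype.card_fin] at happly
  rw [hS, Finset.card_product, Finset.card_univ, Fintype.card_fin] at happly
  exact happly
end
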